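/- arXiv:1912.04714 — 5 statements merged into one kernel-verified Lean document; each statement's English description precedes it below -/
import Mathlib

section
/- Let q = (q_k)_{k≥1} be a sequence of nonnegative reals with ∑_{k≥1} k·q_k < ∞, q_1 > 0, and ∑_{k≥1} k·q_k > 2·∑_{k≥1} q_k. Then there exists a unique β ∈ (0,1) such that ∑_{k≥1} k·q_k = (1 − β²)·∑_{k≥1} k·q_k/(1 − β^k). (For every β ∈ (0,1) the series on the right converges, since 1 − β^k ≥ 1 − β for all k ≥ 1.) -/
/-!
With `c n = (n + 1) q (n + 1)` and `geomDefect n β = 1 - (1 + βⁿ) / (1 + β + ⋯ + βⁿ)`, for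
`0 ≤ β < 1` one has `(1 - β²) / (1 - βⁿ⁺¹) = 1 - β geomDefect n β`, so the equation says exactly
that `Φ β = ∑ c n geomDefect n β` vanishes. Unlike `(1 - β²) / (1 - βⁿ⁺¹)`, `geomDefect n` is
continuous on all of `[0, 1]`, where `|geomDefect n| ≤ 1`; moreover `geomDefect 0 = -1`,
`geomDefect 1 = 0`, `geomDefect n 0 = 0` for `n ≥ 1` and `geomDefect n 1 = 1 - 2 / (n + 1)`. Hence
`Φ 0 = -q₁ < 0 < ∑ k q_k - 2 ∑ q_k = Φ 1`, and the intermediate value theorem gives a root.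
Uniqueness: each `geomDefect n` is nondecreasing, and strictly increasing for `n ≥ 2`; pairing the
terms `βʲ` and `βⁿ⁻ʲ` of the geometric sum reduces this to the monotonicity of
`(x, y) ↦ (x + y) / (1 + x y)` on `[0, 1]²`, with `x y = βⁿ`.
-/

open Finset

noncomputable def geomDefect (n : ℕ) (β : ℝ) : ℝ :=
  1 - (1 + β ^ n) / ∑ j ∈ range (n + 1), β ^ j

lemma one_le_geom_sum {β : ℝ} (hβ : 0 ≤ β) (n : ℕ) : 1 ≤ ∑ j ∈ range (n + 1), β ^ j := by
  rw [sum_range_succ']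
  simpa using sum_nonneg fun j _ => pow_nonneg hβ (j + 1)

lemma two_mul_geom_sum_eq (β : ℝ) (n : ℕ) :
    2 * ∑ j ∈ range (n + 1), β ^ j = ∑ j ∈ range (n + 1), (β ^ j + β ^ (n - j)) := by
  rw [sum_add_distrib, ← sum_range_reflect (fun j => β ^ j) (n + 1)]
  simp only [add_tsub_cancel_right]
  ring

/-- Monotonicity of `(x, y) ↦ (x + y) / (1 + x y)`, cross-multiplied. The difference of the two
sides is `(x' - x) (1 - y y') + (y' - y) (1 - x x')`. -/
lemma add_mul_one_add_mul_le {x y x' y' : ℝ} (hx : 0 ≤ x) (hy : 0 ≤ y) (hxx' : x ≤ x')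
    (hyy' : y ≤ y') (hx' : x' ≤ 1) (hy' : y' ≤ 1) :
    (x + y) * (1 + x' * y') ≤ (x' + y') * (1 + x * y) := by
  nlinarith [mul_nonneg (sub_nonneg.2 hxx')
      (sub_nonneg.2 (mul_le_one₀ (hyy'.trans hy') (hy.trans hyy') hy')),
    mul_nonneg (sub_nonneg.2 hyy')
      (sub_nonneg.2 (mul_le_one₀ (hxx'.trans hx') (hx.trans hxx') hx'))]

lemma add_mul_one_add_mul_lt {x y x' y' : ℝ} (hx : 0 ≤ x) (hy : 0 ≤ y) (hxx' : x < x')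
    (hyy' : y ≤ y') (hx' : x' ≤ 1) (hy1 : y < 1) (hy' : y' ≤ 1) :
    (x + y) * (1 + x' * y') < (x' + y') * (1 + x * y) := by
  have hyy'1 : y * y' < 1 := by nlinarith
  nlinarith [mul_pos (sub_pos.2 hxx') (sub_pos.2 hyy'1),
    mul_nonneg (sub_nonneg.2 hyy')
      (sub_nonneg.2 (mul_le_one₀ (hxx'.le.trans hx') (hx.trans hxx'.le) hx'))]

section GeomSum

variable {a b : ℝ} (n : ℕ)

lemma pow_add_pow_mul_one_add_pow_le {j : ℕ} (hj : j ≤ n) (ha : 0 ≤ a) (hab : a ≤ b)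
    (hb : b ≤ 1) : (a ^ j + a ^ (n - j)) * (1 + b ^ n) ≤ (b ^ j + b ^ (n - j)) * (1 + a ^ n) := by
  rw [← Nat.add_sub_cancel' hj, pow_add, pow_add, Nat.add_sub_cancel_left]
  exact add_mul_one_add_mul_le (pow_nonneg ha _) (pow_nonneg ha _) (pow_le_pow_left₀ ha hab _)
    (pow_le_pow_left₀ ha hab _) (pow_le_one₀ (ha.trans hab) hb) (pow_le_one₀ (ha.trans hab) hb)

lemma geom_sum_mul_one_add_pow_le (ha : 0 ≤ a) (hab : a ≤ b) (hb : b ≤ 1) :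
    (∑ j ∈ range (n + 1), a ^ j) * (1 + b ^ n) ≤ (∑ j ∈ range (n + 1), b ^ j) * (1 + a ^ n) := by
  have h := sum_le_sum fun j hj =>
    pow_add_pow_mul_one_add_pow_le n (mem_range_succ_iff.1 hj) ha hab hb
  rw [← sum_mul, ← sum_mul, ← two_mul_geom_sum_eq, ← two_mul_geom_sum_eq] at h
  linarith

lemma geom_sum_mul_one_add_pow_lt (hn : 2 ≤ n) (ha : 0 ≤ a) (hab : a < b) (hb : b ≤ 1) :
    (∑ j ∈ range (n + 1), a ^ j) * (1 + b ^ n) < (∑ j ∈ range (n + 1), b ^ j) * (1 + a ^ n) := by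
  have hpair : (a ^ 1 + a ^ (n - 1)) * (1 + b ^ n) < (b ^ 1 + b ^ (n - 1)) * (1 + a ^ n) := by
    rw [← Nat.add_sub_cancel' (by omega : 1 ≤ n), pow_add, pow_add, Nat.add_sub_cancel_left,
      pow_one, pow_one]
    exact add_mul_one_add_mul_lt ha (pow_nonneg ha _) hab (pow_le_pow_left₀ ha hab.le _) hb
      (pow_lt_one₀ ha (hab.trans_le hb) (by omega)) (pow_le_one₀ (ha.trans hab.le) hb)
  have h := sum_lt_sum (fun j hj =>
    pow_add_pow_mul_one_add_pow_le n (mem_range_succ_iff.1 hj) ha hab.le hb)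
    ⟨1, mem_range.2 (by omega), hpair⟩
  rw [← sum_mul, ← sum_mul, ← two_mul_geom_sum_eq, ← two_mul_geom_sum_eq] at h
  linarith

end GeomSum

section GeomDefect

variable {β : ℝ} (n : ℕ)

lemma geomDefect_zero_left (β : ℝ) : geomDefect 0 β = -1 := by
  norm_num [geomDefect]

lemma geomDefect_one_left (hβ : 0 ≤ β) : geomDefect 1 β = 0 := by
  have : 1 + β ≠ 0 := by positivity
  simp [geomDefect, sum_range_succ, this]

lemma geomDefect_zero_right {n : ℕ} (hn : n ≠ 0) : geomDefect n 0 = 0 := by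
  simp [geomDefect, sum_range_succ', hn]

lemma geomDefect_one_right : geomDefect n 1 = 1 - 2 / (n + 1) := by
  norm_num [geomDefect]

lemma abs_geomDefect_le_one (hβ0 : 0 ≤ β) (hβ1 : β ≤ 1) : |geomDefect n β| ≤ 1 := by
  have hG := one_le_geom_sum hβ0 n
  have hratio : (1 + β ^ n) / ∑ j ∈ range (n + 1), β ^ j ≤ 2 :=
    div_le_of_le_mul₀ (by positivity) zero_le_two (by nlinarith [pow_le_one₀ hβ0 hβ1 (n := n)])
  rw [geomDefect, abs_le]
  constructor
  · linarith
  · have : 0 ≤ (1 + β ^ n) / ∑ j ∈ range (n + 1), β ^ j := by positivity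
    linarith

lemma continuousOn_geomDefect : ContinuousOn (geomDefect n) (Set.Ici 0) := by
  refine continuousOn_const.sub (ContinuousOn.div (by fun_prop) (by fun_prop) fun β hβ => ?_)
  exact (zero_lt_one.trans_le (one_le_geom_sum hβ n)).ne'

lemma geomDefect_le_geomDefect {a b : ℝ} (ha : 0 ≤ a) (hab : a ≤ b) (hb : b ≤ 1) :
    geomDefect n a ≤ geomDefect n b := by
  have hGa := one_le_geom_sum ha n
  have hGb := one_le_geom_sum (ha.trans hab) n
  rw [geomDefect, geomDefect, sub_le_sub_iff_left, div_le_div_iff₀ (by positivity) (by positivity)]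
  linarith [geom_sum_mul_one_add_pow_le n ha hab hb]

lemma geomDefect_lt_geomDefect {n : ℕ} (hn : 2 ≤ n) {a b : ℝ} (ha : 0 ≤ a) (hab : a < b)
    (hb : b ≤ 1) :
    geomDefect n a < geomDefect n b := by
  have hGa := one_le_geom_sum ha n
  have hGb := one_le_geom_sum (ha.trans hab.le) n
  rw [geomDefect, geomDefect, sub_lt_sub_iff_left, div_lt_div_iff₀ (by positivity) (by positivity)]
  linarith [geom_sum_mul_one_add_pow_lt n hn ha hab hb]

lemma one_sub_sq_div_one_sub_pow (hβ0 : 0 ≤ β) (hβ1 : β < 1) :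
    (1 - β ^ 2) / (1 - β ^ (n + 1)) = 1 - β * geomDefect n β := by
  set G := ∑ j ∈ range (n + 1), β ^ j with hG
  have hGpos : 0 < G := zero_lt_one.trans_le (one_le_geom_sum hβ0 n)
  have hden : 1 - β ^ (n + 1) = (1 - β) * G := by linear_combination mul_geom_sum β (n + 1)
  have hβ1' : 1 - β ≠ 0 := (sub_pos.2 hβ1).ne'
  rw [hden, geomDefect, ← hG]
  field_simp
  linear_combination (1 - β) * hden

end GeomDefect

noncomputable def defectSum (c : ℕ → ℝ) (β : ℝ) : ℝ := ∑' n, c n * geomDefect n β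

lemma defectSum_zero (c : ℕ → ℝ) : defectSum c 0 = -c 0 := by
  have h : ∀ n, c n * geomDefect n 0 = if n = 0 then -c 0 else 0 := fun n => by
    split_ifs with hn
    · rw [hn, geomDefect_zero_left, mul_neg_one]
    · rw [geomDefect_zero_right hn, mul_zero]
  rw [defectSum, tsum_congr h, tsum_ite_eq]

lemma defectSum_one {p : ℕ → ℝ} (hp : Summable p)
    (hp' : Summable fun n => ((n + 1 : ℕ) : ℝ) * p n) :
    defectSum (fun n => ((n + 1 : ℕ) : ℝ) * p n) 1
      = ∑' n, ((n + 1 : ℕ) : ℝ) * p n - 2 * ∑' n, p n := by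
  rw [← tsum_mul_left, ← hp'.tsum_sub (hp.mul_left 2), defectSum]
  refine tsum_congr fun n => ?_
  rw [geomDefect_one_right]
  push_cast
  field_simp

section DefectSum

variable {c : ℕ → ℝ}

lemma norm_mul_geomDefect_le (hc : ∀ n, 0 ≤ c n) {β : ℝ} (hβ : β ∈ Set.Icc (0 : ℝ) 1)
    (n : ℕ) :
    ‖c n * geomDefect n β‖ ≤ c n := by
  rw [norm_mul, Real.norm_of_nonneg (hc n), Real.norm_eq_abs]
  exact mul_le_of_le_one_right (hc n) (abs_geomDefect_le_one n hβ.1 hβ.2)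

lemma exists_pos_of_defectSum_pos (hc : ∀ n, 0 ≤ c n) {β : ℝ} (hβ : 0 ≤ β)
    (h : 0 < defectSum c β) :
    ∃ n, 2 ≤ n ∧ 0 < c n := by
  by_contra! hc0
  refine h.not_ge (tsum_nonpos fun n => ?_)
  match n with
  | 0 => simpa [geomDefect_zero_left] using hc 0
  | 1 => simp [geomDefect_one_left hβ]
  | n + 2 => simp [le_antisymm (hc0 (n + 2) (by omega)) (hc _)]

lemma summable_mul_geomDefect (hc : ∀ n, 0 ≤ c n) (hsum : Summable c) {β : ℝ}
    (hβ : β ∈ Set.Icc (0 : ℝ) 1) :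
    Summable fun n => c n * geomDefect n β :=
  Summable.of_norm_bounded hsum (norm_mul_geomDefect_le hc hβ)

lemma continuousOn_defectSum (hc : ∀ n, 0 ≤ c n) (hsum : Summable c) :
    ContinuousOn (defectSum c) (Set.Icc 0 1) :=
  continuousOn_tsum (fun n => continuousOn_const.mul
    ((continuousOn_geomDefect n).mono Set.Icc_subset_Ici_self)) hsum
    fun n _ hβ => norm_mul_geomDefect_le hc hβ n

lemma defectSum_strictMonoOn (hc : ∀ n, 0 ≤ c n) (hsum : Summable c)
    (hpos : ∃ n, 2 ≤ n ∧ 0 < c n) :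
    StrictMonoOn (defectSum c) (Set.Icc 0 1) := by
  obtain ⟨m, hm, hcm⟩ := hpos
  intro a ha b hb hab
  exact Summable.tsum_lt_tsum (i := m)
    (fun n => mul_le_mul_of_nonneg_left (geomDefect_le_geomDefect n ha.1 hab.le hb.2) (hc n))
    (mul_lt_mul_of_pos_left (geomDefect_lt_geomDefect hm ha.1 hab hb.2) hcm)
    (summable_mul_geomDefect hc hsum ha) (summable_mul_geomDefect hc hsum hb)

lemma one_sub_sq_mul_tsum_div (hc : ∀ n, 0 ≤ c n) (hsum : Summable c) {β : ℝ}
    (hβ : β ∈ Set.Ico (0 : ℝ) 1) :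
    (1 - β ^ 2) * ∑' n, c n / (1 - β ^ (n + 1)) = ∑' n, c n - β * defectSum c β := by
  have hsum' := summable_mul_geomDefect hc hsum (Set.Ico_subset_Icc_self hβ)
  rw [← tsum_mul_left, defectSum, ← tsum_mul_left, ← hsum.tsum_sub (hsum'.mul_left β)]
  refine tsum_congr fun n => ?_
  rw [mul_div_left_comm, one_sub_sq_div_one_sub_pow n hβ.1 hβ.2]
  ring

end DefectSum

/-- Let q = (q_k)_{k≥1} be a sequence of nonnegative reals with
∑_{k≥1} k·q_k < ∞, q_1 > 0, and ∑_{k≥1} k·q_k > 2·∑_{k≥1} q_k. Then there exists a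
unique β ∈ (0,1) such that ∑_{k≥1} k·q_k = (1 − β²)·∑_{k≥1} k·q_k/(1 − β^k). -/
theorem stmt0 (q : ℕ → ℝ) (hq : ∀ k, 1 ≤ k → 0 ≤ q k)
    (hsum : Summable (fun k : ℕ => ((k + 1 : ℕ) : ℝ) * q (k + 1)))
    (hq1 : 0 < q 1)
    (hgt : (∑' k : ℕ, ((k + 1 : ℕ) : ℝ) * q (k + 1)) > 2 * ∑' k : ℕ, q (k + 1)) :
    ∃! β : ℝ, β ∈ Set.Ioo (0 : ℝ) 1 ∧
      (∑' k : ℕ, ((k + 1 : ℕ) : ℝ) * q (k + 1)) =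
        (1 - β ^ 2) * ∑' k : ℕ, ((k + 1 : ℕ) : ℝ) * q (k + 1) / (1 - β ^ (k + 1)) := by
  set c : ℕ → ℝ := fun k => ((k + 1 : ℕ) : ℝ) * q (k + 1)
  have hqk : ∀ k : ℕ, 0 ≤ q (k + 1) := fun k => hq _ k.succ_pos
  have hc : ∀ k, 0 ≤ c k := fun k => mul_nonneg k.succ.cast_nonneg (hqk k)
  have hQ : Summable fun k => q (k + 1) :=
    hsum.of_nonneg_of_le hqk fun k => le_mul_of_one_le_left (hqk k) (by simp)
  have h0 : defectSum c 0 < 0 := by simpa [defectSum_zero, c] using hq1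
  have h1 : 0 < defectSum c 1 := by rw [defectSum_one hQ hsum]; linarith
  have hmono := defectSum_strictMonoOn hc hsum (exists_pos_of_defectSum_pos hc zero_le_one h1)
  have hiff : ∀ β ∈ Set.Ioo (0 : ℝ) 1,
      ∑' k, c k = (1 - β ^ 2) * ∑' k, c k / (1 - β ^ (k + 1)) ↔ defectSum c β = 0 := by
    intro β hβ
    rw [one_sub_sq_mul_tsum_div hc hsum (Set.Ioo_subset_Ico_self hβ), eq_sub_iff_add_eq,
      add_eq_left, mul_eq_zero, or_iff_right hβ.1.ne']
  obtain ⟨β, hβ, hβ0⟩ :=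
    intermediate_value_Ioo zero_le_one (continuousOn_defectSum hc hsum) ⟨h0, h1⟩
  refine ⟨β, ⟨hβ, (hiff β hβ).2 hβ0⟩, fun γ ⟨hγ, hγeq⟩ => ?_⟩
  exact hmono.injOn (Set.Ioo_subset_Icc_self hγ) (Set.Ioo_subset_Icc_self hβ)
    (((hiff γ hγ).1 hγeq).trans hβ0.symm)
end

section
/- Let p = (p_k)_{k≥1} and q = (q_k)_{k≥1} be sequences of reals with 0 ≤ q_k ≤ p_k for every k ≥ 1, ∑_{k≥1} p_k ≤ 1 and ∑_{k≥1} k·p_k < ∞. Then the function k ↦ q_k·log q_k is summable (with the convention 0·log 0 = 0), and ∑_{k≥1} q_k·log q_k ≥ −(1 − ∑_{k≥1} q_k)·log(2·(1 − ∑_{k≥1} q_k)) − (log 2)·∑_{k≥1} (k+1)·q_k, which is finite. In particular H(q) is a finite real number. -/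
/-!
Gibbs' inequality `x log x ≥ x log y + x - y` against the geometric reference weights
`m_k = 2^{-(k+1)}` (total mass `1/2`, `log m_k = -(k+1) log 2`) bounds `∑ q_k log q_k` below by
`-(log 2) ∑ (k+1) q_k + ∑ q_k - 1/2`; the same inequality with `y = 1/2` and `x = 1 - ∑ q_k`
turns `∑ q_k - 1/2` into the term `-(1 - ∑ q_k) log (2 (1 - ∑ q_k))`. Summability of
`q_k log q_k` follows from the same pointwise bound, since `q_k log q_k ≤ 0` when `q_k ≤ 1`.
-/

open Real

lemma Real.mul_log_add_sub_le_mul_log {x y : ℝ} (hx : 0 ≤ x) (hy : 0 < y) :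
    x * log y + (x - y) ≤ x * log x := by
  rcases hx.eq_or_lt with rfl | hx
  · simp [hy.le]
  · have h := one_sub_inv_le_log_of_pos (div_pos hx hy)
    rw [log_div hx.ne' hy.ne', inv_div] at h
    have h' := mul_le_mul_of_nonneg_left h hx.le
    rw [mul_sub, mul_one, mul_div_cancel₀ _ hx.ne'] at h'
    linarith

lemma Real.neg_mul_log_two_mul_le {t : ℝ} (ht : 0 ≤ t) : -(t * log (2 * t)) ≤ 1 / 2 - t := by
  rcases ht.eq_or_lt with rfl | ht
  · norm_num
  · have h := mul_log_add_sub_le_mul_log ht.le (one_half_pos : (0 : ℝ) < 1 / 2)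
    rw [log_mul two_ne_zero ht.ne', one_div, log_inv] at *
    linarith

section Gibbs

variable {ι : Type*} {q m : ι → ℝ}

lemma Summable.mul_log_self_of_le_one (hq0 : ∀ i, 0 ≤ q i) (hq1 : ∀ i, q i ≤ 1)
    (hm0 : ∀ i, 0 < m i) (hq : Summable q) (hm : Summable m)
    (hqm : Summable fun i => q i * log (m i)) : Summable fun i => q i * log (q i) := by
  have hneg : Summable fun i => -(q i * log (q i)) :=
    (hqm.add (hq.sub hm)).neg.of_nonneg_of_le
      (fun i => neg_nonneg.mpr (mul_nonpos_of_nonneg_of_nonpos (hq0 i) (log_nonpos (hq0 i) (hq1 i))))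
      (fun i => neg_le_neg (mul_log_add_sub_le_mul_log (hq0 i) (hm0 i)))
  simpa using hneg.neg

lemma tsum_mul_log_add_sub_le_tsum_mul_log (hq0 : ∀ i, 0 ≤ q i) (hm0 : ∀ i, 0 < m i)
    (hq : Summable q) (hm : Summable m) (hqm : Summable fun i => q i * log (m i))
    (hqq : Summable fun i => q i * log (q i)) :
    ∑' i, q i * log (m i) + (∑' i, q i - ∑' i, m i) ≤ ∑' i, q i * log (q i) := by
  rw [← hq.tsum_sub hm, ← hqm.tsum_add (hq.sub hm)]
  exact (hqm.add (hq.sub hm)).tsum_le_tsum (fun i => mul_log_add_sub_le_mul_log (hq0 i) (hm0 i)) hqq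

end Gibbs

lemma Real.log_half_pow (n : ℕ) : log ((1 / 2 : ℝ) ^ n) = -(n * log 2) := by
  rw [log_pow, one_div, log_inv, mul_neg]

lemma summable_half_pow_add_two : Summable fun k : ℕ => (1 / 2 : ℝ) ^ (k + 2) :=
  (summable_nat_add_iff 2).mpr (summable_geometric_of_lt_one (by norm_num) (by norm_num))

lemma tsum_half_pow_add_two : ∑' k : ℕ, (1 / 2 : ℝ) ^ (k + 2) = 1 / 2 := by
  simp only [pow_add, tsum_mul_right, tsum_geometric_of_lt_one (by norm_num : (0 : ℝ) ≤ 1 / 2)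
    (by norm_num)]
  norm_num

/-- Let p, q be sequences (indexed by k ≥ 1) with 0 ≤ q_k ≤ p_k,
∑ p_k ≤ 1 and ∑ k·p_k < ∞. Then k ↦ q_k·log q_k is summable (convention 0·log 0 = 0,
which holds since `Real.log 0 = 0`), and
∑ q_k·log q_k ≥ −(1 − ∑ q_k)·log(2·(1 − ∑ q_k)) − (log 2)·∑ (k+1)·q_k. -/
theorem stmt2 (p q : ℕ → ℝ)
    (hpq : ∀ k, 1 ≤ k → 0 ≤ q k ∧ q k ≤ p k)
    (hpsum : Summable (fun k : ℕ => ((k + 1 : ℕ) : ℝ) * p (k + 1)))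
    (hp1 : (∑' k : ℕ, p (k + 1)) ≤ 1) :
    Summable (fun k : ℕ => q (k + 1) * Real.log (q (k + 1))) ∧
    (∑' k : ℕ, q (k + 1) * Real.log (q (k + 1))) ≥
      -(1 - ∑' k : ℕ, q (k + 1)) * Real.log (2 * (1 - ∑' k : ℕ, q (k + 1))) -
        Real.log 2 * ∑' k : ℕ, (((k + 1 : ℕ) : ℝ) + 1) * q (k + 1) := by
  set m : ℕ → ℝ := fun k => (1 / 2 : ℝ) ^ (k + 2)
  have hq0 k : 0 ≤ q (k + 1) := (hpq (k + 1) k.succ_pos).1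
  have hqp k : q (k + 1) ≤ p (k + 1) := (hpq (k + 1) k.succ_pos).2
  have hp0 k : 0 ≤ p (k + 1) := (hq0 k).trans (hqp k)
  have hp : Summable fun k => p (k + 1) := hpsum.of_nonneg_of_le hp0 fun k =>
    le_mul_of_one_le_left (hp0 k) (by exact_mod_cast k.succ_pos)
  have hq : Summable fun k => q (k + 1) := hp.of_nonneg_of_le hq0 hqp
  have hkq : Summable fun k : ℕ => (((k + 1 : ℕ) : ℝ) + 1) * q (k + 1) :=
    (hpsum.mul_left 2).of_nonneg_of_le (fun k => mul_nonneg (by positivity) (hq0 k)) fun k => by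
      have : (0 : ℝ) ≤ k := k.cast_nonneg
      push_cast
      nlinarith [hq0 k, hqp k]
  have hlogm k : q (k + 1) * log (m k) = -log 2 * ((((k + 1 : ℕ) : ℝ) + 1) * q (k + 1)) := by
    simp only [m, log_half_pow]
    push_cast
    ring
  have hqm : Summable fun k => q (k + 1) * log (m k) := by
    simpa only [hlogm] using hkq.mul_left (-log 2)
  have hq1 k : q (k + 1) ≤ 1 := (hqp k).trans <| (hp.le_tsum k fun j _ => hp0 j).trans hp1
  have hqq := hq.mul_log_self_of_le_one hq0 hq1 (fun k => by positivity)
    summable_half_pow_add_two hqm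
  refine ⟨hqq, ?_⟩
  have hgibbs := tsum_mul_log_add_sub_le_tsum_mul_log hq0 (fun k => by positivity) hq
    summable_half_pow_add_two hqm hqq
  rw [tsum_congr hlogm, tsum_mul_left, tsum_half_pow_add_two] at hgibbs
  have hQ1 : ∑' k, q (k + 1) ≤ 1 := (hq.tsum_le_tsum hqp hp).trans hp1
  have hmass := neg_mul_log_two_mul_le (sub_nonneg.mpr hQ1)
  rw [ge_iff_le, neg_mul]
  linarith
end

section
/- Assume in addition that ∑_{k≥1} k²·p_k < ∞, that ∑_{k≥1} k·(k−2)·p_k ≤ 0, and that T ≥ μ/2 where μ = ∑_{k≥1} k·p_k. Define G_0(u) = ∑_{k≥1} p_k·u^k for u ∈ [0,1], and F_1(t) = G_0(1) − G_0(t) = 1 − G_0(t); F_1 is a continuous strictly decreasing bijection of [0,1] onto [0,1], and set f_1(t) = F_1⁻¹(t) for 0 ≤ t ≤ 1 and f_1(t) = 0 for t > 1. Define ζ_0(t) = 0, ζ_k(t) = p_k·(f_1(t))^k for k ≥ 1, and ψ(t) = −2·∫_0^t r_0(ζ(s)) ds + ∑_{k≥1} (k−2)·(p_k − ζ_k(t)).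 Then (ζ, ψ) ∈ C_T and I_T(ζ, ψ) = 0. -/
/-!
The control `φ ≡ 1` costs nothing because `ℓ(1) = 0`, so it suffices to show that `(ζ, ψ)` lies
in `C_T` and is driven by `φ ≡ 1`, i.e. `ζ_k' = -r_k(ζ)`. For `ζ_k = p_k f^k` with `ζ_0 = 0` one
has `r(ζ) = f G₀'(f)`, and differentiating `G₀(f(t)) = 1 - t` gives `f' = -1/G₀'(f)`; hence
`(p_k f^k)' = -k p_k f^k / (f G₀'(f)) = -r_k(ζ)`. Since `ζ_0 ≡ 0`, the Skorokhod reflection must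
stay inactive, i.e. `ψ` must be nonincreasing. This is where `∑ k(k-2)p_k ≤ 0` enters: for
`0 ≤ w ≤ v ≤ 1` every term satisfies `(k-2)(v^k - w^k) ≤ k(k-2) v²(v - w)`, so the increment
`∑ (k-2) p_k (v^k - w^k)` of `ψ` between times with `f = v` and `f = w` is at most
`v²(v - w) ∑ k(k-2)p_k ≤ 0`.
-/

open MeasureTheory
open scoped ENNReal

/-- r(x) = max(x₀,0) + ∑_{k≥1} k·x_k. -/
noncomputable def rtot (x : ℕ → ℝ) : ℝ :=
  max (x 0) 0 + ∑' k : ℕ, ((k + 1 : ℕ) : ℝ) * x (k + 1)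

open Classical in
/-- r_k(x): if 0 < r(x) < ∞ (finiteness encoded as summability of k·x_k) then
r_0(x) = max(x₀,0)/r(x) and r_k(x) = k·x_k/r(x) for k ≥ 1; otherwise r_k(x) = 0. -/
noncomputable def rcoord (x : ℕ → ℝ) (k : ℕ) : ℝ :=
  if 0 < rtot x ∧ Summable (fun j : ℕ => ((j + 1 : ℕ) : ℝ) * x (j + 1)) then
    (if k = 0 then max (x 0) 0 / rtot x else (k : ℝ) * x k / rtot x)
  else 0

/-- The one-dimensional Skorokhod map: Γ(ψ)(t) = ψ(t) − min(inf_{0≤s≤t} ψ(s), 0). -/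
noncomputable def Skorokhod (ψ : ℝ → ℝ) (t : ℝ) : ℝ :=
  ψ t - min (sInf (ψ '' Set.Icc 0 t)) 0

/-- f is absolutely continuous on [0,T]: f(t) = f(0) + ∫₀ᵗ g for some g ∈ L¹([0,T]). -/
def AbsContOn (f : ℝ → ℝ) (T : ℝ) : Prop :=
  ∃ g : ℝ → ℝ, MeasureTheory.IntegrableOn g (Set.Icc 0 T) ∧
    ∀ t ∈ Set.Icc (0 : ℝ) T, f t = f 0 + ∫ s in (0 : ℝ)..t, g s

/-- (ζ, ψ) ∈ C_T. -/
def memCT (T : ℝ) (p : ℕ → ℝ) (ζ : ℝ → ℕ → ℝ) (ψ : ℝ → ℝ) : Prop :=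
  (∀ k : ℕ, ContinuousOn (fun t => ζ t k) (Set.Icc 0 T)) ∧
  ContinuousOn ψ (Set.Icc 0 T) ∧
  ψ 0 = 0 ∧ AbsContOn ψ T ∧
  (∀ t ∈ Set.Icc (0 : ℝ) T, ζ t 0 = Skorokhod ψ t) ∧
  (∀ k : ℕ, 1 ≤ k →
    ζ 0 k = p k ∧ (∀ t ∈ Set.Icc (0 : ℝ) T, 0 ≤ ζ t k) ∧
    AntitoneOn (fun t => ζ t k) (Set.Icc 0 T) ∧ AbsContOn (fun t => ζ t k) T)

/-- φ ∈ S_T(ζ, ψ). -/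
def memST (T : ℝ) (p : ℕ → ℝ) (ζ : ℝ → ℕ → ℝ) (ψ : ℝ → ℝ)
    (φ : ℕ → ℝ → ℝ → ℝ) : Prop :=
  (∀ k, Measurable (Function.uncurry (φ k))) ∧
  (∀ k s y, 0 ≤ φ k s y) ∧
  (∀ t ∈ Set.Icc (0 : ℝ) T,
    ψ t = ∑' k : ℕ, ((k : ℝ) - 2) *
      ∫ s in (0 : ℝ)..t, ∫ y in (0 : ℝ)..1,
        (if y < rcoord (ζ s) k then φ k s y else 0)) ∧
  (∀ k : ℕ, 1 ≤ k → ∀ t ∈ Set.Icc (0 : ℝ) T,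
    ζ t k = p k - ∫ s in (0 : ℝ)..t, ∫ y in (0 : ℝ)..1,
      (if y < rcoord (ζ s) k then φ k s y else 0))

/-- ℓ(u) = u·log u − u + 1 (so ℓ(0) = 1, using `Real.log 0 = 0`). -/
noncomputable def ellFn (u : ℝ) : ℝ := u * Real.log u - u + 1

/-- The cost ∑_{k≥0} ∫_{[0,T]×[0,1]} ℓ(φ_k(s,y)) ds dy of a control, in [0,∞]. -/
noncomputable def costOf (T : ℝ) (φ : ℕ → ℝ → ℝ → ℝ) : ℝ≥0∞ :=
  ∑' k : ℕ, ∫⁻ s in Set.Icc (0 : ℝ) T, ∫⁻ y in Set.Icc (0 : ℝ) 1,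
    ENNReal.ofReal (ellFn (φ k s y))

open Classical in
/-- The rate function I_T, equal to +∞ off C_T (and inf ∅ = +∞). -/
noncomputable def IT (T : ℝ) (p : ℕ → ℝ) (ζ : ℝ → ℕ → ℝ) (ψ : ℝ → ℝ) : ℝ≥0∞ :=
  if memCT T p ζ ψ then
    ⨅ (φ : ℕ → ℝ → ℝ → ℝ) (_ : memST T p ζ ψ φ), costOf T φ
  else ⊤

open Set Filter Topology

lemma rcoord_zero_of_nonpos {x : ℕ → ℝ} (hx : x 0 ≤ 0) : rcoord x 0 = 0 := by
  simp [rcoord, max_eq_right hx]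

lemma rcoord_mem_Icc {x : ℕ → ℝ} (hx : ∀ j, 0 ≤ x (j + 1)) (k : ℕ) : rcoord x k ∈ Icc 0 1 := by
  have hterm : ∀ j : ℕ, 0 ≤ ((j + 1 : ℕ) : ℝ) * x (j + 1) := fun j => by
    have := hx j; positivity
  unfold rcoord
  split_ifs with h hk
  · have : 0 ≤ ∑' j : ℕ, ((j + 1 : ℕ) : ℝ) * x (j + 1) := tsum_nonneg hterm
    refine ⟨div_nonneg (le_max_right _ _) h.1.le, (div_le_one h.1).2 ?_⟩
    unfold rtot
    linarith
  · obtain ⟨j, rfl⟩ := Nat.exists_eq_add_one_of_ne_zero hk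
    refine ⟨div_nonneg (hterm j) h.1.le, (div_le_one h.1).2 ?_⟩
    have := h.2.le_tsum j fun i _ => hterm i
    unfold rtot
    linarith [le_max_right (x 0) 0]
  · exact ⟨le_rfl, zero_le_one⟩

-- At `rtot x = 0` both sides vanish, the right one because `a / 0 = 0`.
lemma rcoord_of_summable {x : ℕ → ℝ} (hs : Summable fun j : ℕ => ((j + 1 : ℕ) : ℝ) * x (j + 1))
    (hr : 0 ≤ rtot x) {k : ℕ} (hk : k ≠ 0) : rcoord x k = k * x k / rtot x := by
  rcases hr.lt_or_eq with hr | hr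
  · rw [rcoord, if_pos ⟨hr, hs⟩, if_neg hk]
  · simp [rcoord, ← hr]

lemma integral_ite_lt_eq {c : ℝ} (hc : c ∈ Icc (0 : ℝ) 1) :
    ∫ y in (0 : ℝ)..1, (if y < c then (1 : ℝ) else 0) = c := by
  have hind : (fun y : ℝ => if y < c then (1 : ℝ) else 0) = (Iio c).indicator fun _ => 1 := by
    ext y
    simp [indicator_apply]
  have hset : Ioc (0 : ℝ) 1 ∩ Iio c = Ioo 0 c :=
    ext fun y => ⟨fun h => ⟨h.1.1, h.2⟩, fun h => ⟨⟨h.1, h.2.le.trans hc.2⟩, h.2⟩⟩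
  rw [intervalIntegral.integral_of_le zero_le_one, hind, setIntegral_indicator measurableSet_Iio,
    hset, setIntegral_const, Real.volume_real_Ioo_of_le hc.1]
  simp

lemma skorokhod_eq_zero_of_antitoneOn {ψ : ℝ → ℝ} {T t : ℝ} (hψ : AntitoneOn ψ (Icc 0 T))
    (hψ0 : ψ 0 = 0) (ht : t ∈ Icc 0 T) : Skorokhod ψ t = 0 := by
  have hsub : Icc 0 t ⊆ Icc 0 T := Icc_subset_Icc_right ht.2
  have hinf : sInf (ψ '' Icc 0 t) = ψ t :=
    IsLeast.csInf_eq ⟨mem_image_of_mem ψ (right_mem_Icc.2 ht.1),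
      forall_mem_image.2 fun s hs => hψ (hsub hs) ht hs.2⟩
  have hle : ψ t ≤ 0 := hψ0 ▸ hψ (left_mem_Icc.2 (ht.1.trans ht.2)) ht ht.1
  rw [Skorokhod, hinf, min_eq_left hle, sub_self]

lemma costOf_one (T : ℝ) : costOf T (fun _ _ _ => 1) = 0 := by
  simp [costOf, ellFn]

lemma IT_eq_zero_of_memST_one {T : ℝ} {p : ℕ → ℝ} {ζ : ℝ → ℕ → ℝ} {ψ : ℝ → ℝ}
    (hC : memCT T p ζ ψ) (hS : memST T p ζ ψ fun _ _ _ => 1) : IT T p ζ ψ = 0 := by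
  rw [IT, if_pos hC]
  exact le_antisymm ((iInf₂_le _ hS).trans (costOf_one T).le) bot_le

lemma integrable_tsum_of_summable_integral_norm {α ι E : Type*} [MeasurableSpace α]
    {μ : Measure α} [Countable ι] [NormedAddCommGroup E] [CompleteSpace E] {F : ι → α → E}
    (hF : ∀ i, Integrable (F i) μ) (hsum : Summable fun i => ∫ a, ‖F i a‖ ∂μ) :
    Integrable (fun a => ∑' i, F i a) μ := by
  have hne : ∑' i, ‖(hF i).toL1 (F i)‖ₑ ≠ ∞ :=
    tsum_enorm_ne_top_iff_summable_norm.2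
      (hsum.congr fun i => (L1.norm_of_fun_eq_integral_norm _).symm)
  refine (L1.integrable_coeFn (∑' i, (hF i).toL1 (F i))).congr ?_
  filter_upwards [Lp.coeFn_tsum hne, ae_all_iff.2 fun i => (hF i).coeFn_toL1] with a h1 h2
  rw [h1]
  exact tsum_congr h2

lemma AbsContOn.continuousOn {f : ℝ → ℝ} {T : ℝ} (hf : AbsContOn f T) :
    ContinuousOn f (Icc 0 T) := by
  obtain ⟨g, hg, hfg⟩ := hf
  rcases le_or_gt 0 T with hT | hT
  · have hprim := intervalIntegral.continuousOn_primitive_interval (μ := volume) (a := 0) (b := T)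
      (f := g) (by rwa [uIcc_of_le hT])
    rw [uIcc_of_le hT] at hprim
    exact (continuousOn_const.add hprim).congr hfg
  · simp [Icc_eq_empty (not_le.2 hT)]

lemma AbsContOn.congr {f g : ℝ → ℝ} {T : ℝ} (hf : AbsContOn f T) (hT : 0 ≤ T)
    (h : EqOn f g (Icc 0 T)) : AbsContOn g T := by
  obtain ⟨φ, hφ, hfφ⟩ := hf
  exact ⟨φ, hφ, fun t ht => by rw [← h ht, ← h (left_mem_Icc.2 hT), hfφ t ht]⟩

lemma absContOn_tsum_integral {T : ℝ} {g : ℕ → ℝ → ℝ} (hg : ∀ k, IntegrableOn (g k) (Icc 0 T))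
    (hsum : Summable fun k => ∫ s in Icc 0 T, ‖g k s‖) :
    AbsContOn (fun t => ∑' k, ∫ s in (0 : ℝ)..t, g k s) T := by
  refine ⟨fun s => ∑' k, g k s, integrable_tsum_of_summable_integral_norm hg hsum, fun t ht => ?_⟩
  have hsub : Ioc 0 t ⊆ Icc 0 T := Ioc_subset_Icc_self.trans (Icc_subset_Icc_right ht.2)
  simp only [intervalIntegral.integral_same, tsum_zero, zero_add,
    intervalIntegral.integral_of_le ht.1]
  refine integral_tsum_of_summable_integral_norm (fun k => (hg k).mono_set hsub) ?_
  refine hsum.of_nonneg_of_le (fun k => integral_nonneg fun _ => norm_nonneg _) fun k => ?_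
  exact setIntegral_mono_set (hg k).norm (ae_of_all _ fun _ => norm_nonneg _) hsub.eventuallyLE

lemma AntitoneOn.continuousOn_of_surjOn_Icc {f : ℝ → ℝ} {a b c d : ℝ}
    (hf : AntitoneOn f (Icc a b)) (hmaps : MapsTo f (Icc a b) (Icc c d))
    (hsurj : SurjOn f (Icc a b) (Icc c d)) : ContinuousOn f (Icc a b) := by
  rw [continuousOn_iff_continuous_domRestrict]
  let F : Icc a b → (Icc c d)ᵒᵈ := fun t => OrderDual.toDual ⟨f t, hmaps t.2⟩
  have hF : Continuous F := by
    refine Monotone.continuous_of_surjective (fun s t hst => hf s.2 t.2 hst) fun y => ?_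
    obtain ⟨x, hx, hxy⟩ := hsurj (OrderDual.ofDual y).2
    exact ⟨⟨x, hx⟩, Subtype.ext hxy⟩
  exact continuous_subtype_val.comp (continuous_ofDual.comp hF)

lemma abs_natCast_succ_sub_two_le (j : ℕ) : |((j + 1 : ℕ) : ℝ) - 2| ≤ ((j + 1 : ℕ) : ℝ) := by
  rw [abs_le]
  push_cast
  constructor <;> linarith [(j.cast_nonneg : (0 : ℝ) ≤ j)]

lemma summable_natCast_sub_two_mul {p a : ℕ → ℝ}
    (hμ : Summable fun j : ℕ => ((j + 1 : ℕ) : ℝ) * p (j + 1))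
    (ha : ∀ j, a j ∈ Icc 0 (p (j + 1))) :
    Summable fun j : ℕ => (((j + 1 : ℕ) : ℝ) - 2) * a j :=
  hμ.of_norm_bounded fun j => by
    rw [norm_mul, Real.norm_eq_abs, Real.norm_of_nonneg (ha j).1]
    exact mul_le_mul (abs_natCast_succ_sub_two_le j) (ha j).2 (ha j).1 (Nat.cast_nonneg _)

/-- The path driven by the control `φ ≡ 1`: `ζ_k' = -r_k(ζ)` on `[0, T]` for `k ≥ 1`. -/
structure IsFluidSolution (T : ℝ) (p : ℕ → ℝ) (ζ : ℝ → ℕ → ℝ) : Prop where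
  nonneg : ∀ t ∈ Icc 0 T, ∀ k, 1 ≤ k → 0 ≤ ζ t k
  integrableOn : ∀ k, 1 ≤ k → IntegrableOn (fun s => rcoord (ζ s) k) (Icc 0 T)
  eq_sub_integral : ∀ k, 1 ≤ k → ∀ t ∈ Icc 0 T, ζ t k = p k - ∫ s in (0 : ℝ)..t, rcoord (ζ s) k

namespace IsFluidSolution

variable {T : ℝ} {p : ℕ → ℝ} {ζ : ℝ → ℕ → ℝ} {ψ : ℝ → ℝ}

lemma rcoord_mem_Icc (hζ : IsFluidSolution T p ζ) {s : ℝ} (hs : s ∈ Icc 0 T) (k : ℕ) :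
    rcoord (ζ s) k ∈ Icc 0 1 :=
  _root_.rcoord_mem_Icc (fun j => hζ.nonneg s hs (j + 1) (Nat.le_add_left 1 j)) k

lemma intervalIntegrable (hζ : IsFluidSolution T p ζ) {k : ℕ} (hk : 1 ≤ k) {t : ℝ}
    (ht : t ∈ Icc 0 T) : IntervalIntegrable (fun s => rcoord (ζ s) k) volume 0 t :=
  ((hζ.integrableOn k hk).mono_set (by rw [uIcc_of_le ht.1]; exact Icc_subset_Icc_right ht.2)
    ).intervalIntegrable

lemma integral_mem_Icc (hζ : IsFluidSolution T p ζ) {k : ℕ} (hk : 1 ≤ k) {t : ℝ}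
    (ht : t ∈ Icc 0 T) : ∫ s in (0 : ℝ)..t, rcoord (ζ s) k ∈ Icc 0 (p k) := by
  have h := hζ.eq_sub_integral k hk t ht
  have h0 := hζ.nonneg t ht k hk
  exact ⟨intervalIntegral.integral_nonneg ht.1 fun s hs =>
    (hζ.rcoord_mem_Icc ⟨hs.1, hs.2.trans ht.2⟩ k).1, by linarith⟩

lemma map_zero (hζ : IsFluidSolution T p ζ) (hT : 0 ≤ T) {k : ℕ} (hk : 1 ≤ k) : ζ 0 k = p k := by
  simpa using hζ.eq_sub_integral k hk 0 (left_mem_Icc.2 hT)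

lemma absContOn (hζ : IsFluidSolution T p ζ) (hT : 0 ≤ T) {k : ℕ} (hk : 1 ≤ k) :
    AbsContOn (fun t => ζ t k) T :=
  ⟨fun s => -rcoord (ζ s) k, (hζ.integrableOn k hk).neg, fun t ht => by
    simp only [intervalIntegral.integral_neg, hζ.map_zero hT hk, hζ.eq_sub_integral k hk t ht]
    ring⟩

lemma antitoneOn (hζ : IsFluidSolution T p ζ) {k : ℕ} (hk : 1 ≤ k) :
    AntitoneOn (fun t => ζ t k) (Icc 0 T) := by
  intro a ha b hb hab
  simp only [hζ.eq_sub_integral k hk a ha, hζ.eq_sub_integral k hk b hb, sub_le_sub_iff_left]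
  rw [← sub_nonneg, intervalIntegral.integral_interval_sub_left (hζ.intervalIntegrable hk hb)
    (hζ.intervalIntegrable hk ha)]
  exact intervalIntegral.integral_nonneg hab fun s hs =>
    (hζ.rcoord_mem_Icc ⟨ha.1.trans hs.1, hs.2.trans hb.2⟩ k).1

lemma integral_ite_rcoord (hζ : IsFluidSolution T p ζ) {t : ℝ} (ht : t ∈ Icc 0 T) (k : ℕ) :
    ∫ s in (0 : ℝ)..t, ∫ y in (0 : ℝ)..1, (if y < rcoord (ζ s) k then (1 : ℝ) else 0) =
      ∫ s in (0 : ℝ)..t, rcoord (ζ s) k :=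
  intervalIntegral.integral_congr fun s hs => by
    rw [uIcc_of_le ht.1] at hs
    exact integral_ite_lt_eq (hζ.rcoord_mem_Icc ⟨hs.1, hs.2.trans ht.2⟩ k)

lemma summable_sub_two_mul_integral (hζ : IsFluidSolution T p ζ)
    (hμ : Summable fun j : ℕ => ((j + 1 : ℕ) : ℝ) * p (j + 1)) {t : ℝ} (ht : t ∈ Icc 0 T) :
    Summable fun j : ℕ => (((j + 1 : ℕ) : ℝ) - 2) * ∫ s in (0 : ℝ)..t, rcoord (ζ s) (j + 1) :=
  summable_natCast_sub_two_mul hμ fun j => hζ.integral_mem_Icc (Nat.le_add_left 1 j) ht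

lemma absContOn_tsum (hζ : IsFluidSolution T p ζ) (hT : 0 ≤ T)
    (hμ : Summable fun j : ℕ => ((j + 1 : ℕ) : ℝ) * p (j + 1)) :
    AbsContOn (fun t => ∑' j : ℕ, (((j + 1 : ℕ) : ℝ) - 2) * (p (j + 1) - ζ t (j + 1))) T := by
  set g : ℕ → ℝ → ℝ := fun j s => (((j + 1 : ℕ) : ℝ) - 2) * rcoord (ζ s) (j + 1)
  have hg : ∀ j, IntegrableOn (g j) (Icc 0 T) := fun j =>
    (hζ.integrableOn _ (Nat.le_add_left 1 j)).const_mul _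
  have hnorm : ∀ j, ∫ s in Icc 0 T, ‖g j s‖ =
      |(((j + 1 : ℕ) : ℝ) - 2) * ∫ s in (0 : ℝ)..T, rcoord (ζ s) (j + 1)| := fun j => by
    rw [abs_mul, abs_of_nonneg (hζ.integral_mem_Icc (Nat.le_add_left 1 j) (right_mem_Icc.2 hT)).1,
      intervalIntegral.integral_of_le hT, ← integral_Icc_eq_integral_Ioc, ← integral_const_mul]
    refine setIntegral_congr_fun measurableSet_Icc fun s hs => ?_
    rw [norm_mul, Real.norm_eq_abs, Real.norm_of_nonneg (hζ.rcoord_mem_Icc hs _).1]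
  refine (absContOn_tsum_integral hg ((hζ.summable_sub_two_mul_integral hμ
    (right_mem_Icc.2 hT)).abs.congr fun j => (hnorm j).symm)).congr hT fun t ht =>
      tsum_congr fun j => ?_
  simp only [g, intervalIntegral.integral_const_mul,
    hζ.eq_sub_integral _ (Nat.le_add_left 1 j) t ht, sub_sub_cancel]

lemma memCT (hζ : IsFluidSolution T p ζ) (hT : 0 ≤ T)
    (hμ : Summable fun j : ℕ => ((j + 1 : ℕ) : ℝ) * p (j + 1))
    (hζ0 : ∀ t ∈ Icc 0 T, ζ t 0 = 0)
    (hψ : EqOn (fun t => ∑' j : ℕ, (((j + 1 : ℕ) : ℝ) - 2) * (p (j + 1) - ζ t (j + 1))) ψ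
      (Icc 0 T))
    (hanti : AntitoneOn ψ (Icc 0 T)) : _root_.memCT T p ζ ψ := by
  have hψAC : AbsContOn ψ T := (hζ.absContOn_tsum hT hμ).congr hT hψ
  have hψ0 : ψ 0 = 0 := by
    rw [← hψ (left_mem_Icc.2 hT)]
    simp [hζ.map_zero hT]
  refine ⟨fun k => ?_, hψAC.continuousOn, hψ0, hψAC, fun t ht => by
    rw [hζ0 t ht, skorokhod_eq_zero_of_antitoneOn hanti hψ0 ht], fun k hk =>
      ⟨hζ.map_zero hT hk, fun t ht => hζ.nonneg t ht k hk, hζ.antitoneOn hk, hζ.absContOn hT hk⟩⟩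
  rcases Nat.eq_zero_or_pos k with rfl | hk
  · exact continuousOn_const.congr hζ0
  · exact (hζ.absContOn hT hk).continuousOn

lemma memST_one (hζ : IsFluidSolution T p ζ)
    (hμ : Summable fun j : ℕ => ((j + 1 : ℕ) : ℝ) * p (j + 1))
    (hψ : ∀ t ∈ Icc (0 : ℝ) T, ψ t = -2 * (∫ s in (0 : ℝ)..t, rcoord (ζ s) 0) +
      ∑' j : ℕ, (((j + 1 : ℕ) : ℝ) - 2) * (p (j + 1) - ζ t (j + 1))) :
    memST T p ζ ψ fun _ _ _ => 1 := by
  refine ⟨fun _ => measurable_const, fun _ _ _ => zero_le_one, fun t ht => ?_, fun k hk t ht => ?_⟩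
  · beta_reduce
    simp only [hζ.integral_ite_rcoord ht]
    rw [tsum_eq_zero_add' (f := fun k : ℕ => ((k : ℝ) - 2) * ∫ s in (0 : ℝ)..t, rcoord (ζ s) k)
      (hζ.summable_sub_two_mul_integral hμ ht), hψ t ht, Nat.cast_zero, zero_sub]
    refine congrArg _ (tsum_congr fun j => ?_)
    rw [hζ.eq_sub_integral _ (Nat.le_add_left 1 j) t ht, sub_sub_cancel]
  · beta_reduce
    rw [hζ.integral_ite_rcoord ht, ← hζ.eq_sub_integral k hk t ht]

theorem memCT_and_IT_eq_zero (hζ : IsFluidSolution T p ζ) (hT : 0 ≤ T)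
    (hμ : Summable fun j : ℕ => ((j + 1 : ℕ) : ℝ) * p (j + 1))
    (hζ0 : ∀ t ∈ Icc 0 T, ζ t 0 = 0)
    (hψ : ∀ t ∈ Icc (0 : ℝ) T, ψ t = -2 * (∫ s in (0 : ℝ)..t, rcoord (ζ s) 0) +
      ∑' j : ℕ, (((j + 1 : ℕ) : ℝ) - 2) * (p (j + 1) - ζ t (j + 1)))
    (hanti : AntitoneOn (fun t => ∑' j : ℕ, (((j + 1 : ℕ) : ℝ) - 2) * (p (j + 1) - ζ t (j + 1)))
      (Icc 0 T)) :
    _root_.memCT T p ζ ψ ∧ IT T p ζ ψ = 0 := by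
  have hψ' : EqOn (fun t => ∑' j : ℕ, (((j + 1 : ℕ) : ℝ) - 2) * (p (j + 1) - ζ t (j + 1))) ψ
      (Icc 0 T) := fun t ht => by
    have hr0 : ∫ s in (0 : ℝ)..t, rcoord (ζ s) 0 = 0 := by
      rw [intervalIntegral.integral_congr (g := fun _ => 0) fun s hs => ?_,
        intervalIntegral.integral_zero]
      rw [uIcc_of_le ht.1] at hs
      exact rcoord_zero_of_nonpos (hζ0 s ⟨hs.1, hs.2.trans ht.2⟩).le
    rw [hψ t ht, hr0, mul_zero, zero_add]
  have hC := hζ.memCT hT hμ hζ0 hψ' (hanti.congr hψ')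
  exact ⟨hC, IT_eq_zero_of_memST_one hC (hζ.memST_one hμ hψ)⟩

end IsFluidSolution

noncomputable def genFun (p : ℕ → ℝ) (u : ℝ) : ℝ := ∑' k : ℕ, p (k + 1) * u ^ (k + 1)

noncomputable def genFunDeriv (p : ℕ → ℝ) (u : ℝ) : ℝ :=
  ∑' k : ℕ, ((k + 1 : ℕ) : ℝ) * p (k + 1) * u ^ k

section GeneratingFunction

variable {p : ℕ → ℝ}

lemma norm_mul_pow_le {c u : ℝ} (hc : 0 ≤ c) (hu : |u| ≤ 1) (n : ℕ) : ‖c * u ^ n‖ ≤ c := by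
  rw [norm_mul, norm_pow, Real.norm_of_nonneg hc, Real.norm_eq_abs]
  exact mul_le_of_le_one_right hc (pow_le_one₀ (abs_nonneg u) hu)

lemma summable_natCast_succ_mul_of_sq (hp : ∀ k, 0 ≤ p (k + 1))
    (hp2 : Summable fun k : ℕ => ((k + 1 : ℕ) : ℝ) ^ 2 * p (k + 1)) :
    Summable fun k : ℕ => ((k + 1 : ℕ) : ℝ) * p (k + 1) :=
  hp2.of_nonneg_of_le (fun k => mul_nonneg (Nat.cast_nonneg _) (hp k)) fun k =>
    mul_le_mul_of_nonneg_right
      (le_self_pow₀ (by exact_mod_cast Nat.le_add_left 1 k) two_ne_zero) (hp k)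

lemma exists_pos_of_tsum_eq_one (hp : ∀ k, 0 ≤ p (k + 1)) (hp1 : ∑' k : ℕ, p (k + 1) = 1) :
    ∃ k, 0 < p (k + 1) := by
  by_contra! h
  have hzero : ∀ k, p (k + 1) = 0 := fun k => le_antisymm (h k) (hp k)
  simp [hzero] at hp1

lemma genFun_zero : genFun p 0 = 0 := by
  simp [genFun]

lemma genFun_one : genFun p 1 = ∑' k : ℕ, p (k + 1) := by
  simp [genFun]

lemma strictMonoOn_genFun (hp : ∀ k, 0 ≤ p (k + 1)) (hp1 : ∑' k : ℕ, p (k + 1) = 1) :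
    StrictMonoOn (genFun p) (Icc 0 1) := by
  obtain ⟨k, hk⟩ := exists_pos_of_tsum_eq_one hp hp1
  have hs : Summable fun k : ℕ => p (k + 1) := by
    by_contra h
    simp [tsum_eq_zero_of_not_summable h] at hp1
  have hsum : ∀ u ∈ Icc (0 : ℝ) 1, Summable fun j : ℕ => p (j + 1) * u ^ (j + 1) := fun u hu =>
    hs.of_norm_bounded fun j => norm_mul_pow_le (hp j) (abs_le.2 ⟨by linarith [hu.1], hu.2⟩) _
  intro u hu v hv huv
  exact Summable.tsum_lt_tsum (i := k)
    (fun j => mul_le_mul_of_nonneg_left (pow_le_pow_left₀ hu.1 huv.le _) (hp j))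
    (mul_lt_mul_of_pos_left (pow_lt_pow_left₀ huv hu.1 (Nat.succ_ne_zero k)) hk)
    (hsum u hu) (hsum v hv)

lemma hasDerivAt_genFun (hp : ∀ k, 0 ≤ p (k + 1))
    (hμ : Summable fun k : ℕ => ((k + 1 : ℕ) : ℝ) * p (k + 1)) {u : ℝ} (hu : u ∈ Ioo (-1) 1) :
    HasDerivAt (genFun p) (genFunDeriv p u) u := by
  refine hasDerivAt_tsum_of_isPreconnected hμ isOpen_Ioo isPreconnected_Ioo (fun k y _ => ?_)
    (fun k y hy => norm_mul_pow_le (mul_nonneg (Nat.cast_nonneg _) (hp k))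
      (abs_le.2 ⟨hy.1.le, hy.2.le⟩) _) (y₀ := 0) ⟨by norm_num, by norm_num⟩ (by simp) hu
  simpa [mul_comm, mul_assoc, mul_left_comm] using (hasDerivAt_pow (k + 1) y).const_mul (p (k + 1))

lemma genFunDeriv_pos (hp : ∀ k, 0 ≤ p (k + 1))
    (hp1 : ∑' k : ℕ, p (k + 1) = 1) (hμ : Summable fun k : ℕ => ((k + 1 : ℕ) : ℝ) * p (k + 1))
    {u : ℝ} (hu0 : 0 < u) (hu1 : u ≤ 1) : 0 < genFunDeriv p u := by
  obtain ⟨k, hk⟩ := exists_pos_of_tsum_eq_one hp hp1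
  have hsum : Summable fun j : ℕ => ((j + 1 : ℕ) : ℝ) * p (j + 1) * u ^ j :=
    hμ.of_norm_bounded fun j => norm_mul_pow_le (mul_nonneg (Nat.cast_nonneg _) (hp j))
      (abs_le.2 ⟨by linarith, hu1⟩) j
  calc 0 < ((k + 1 : ℕ) : ℝ) * p (k + 1) * u ^ k := by positivity
    _ ≤ genFunDeriv p u := hsum.le_tsum k fun j _ => by have := hp j; positivity

end GeneratingFunction

def thinned (p : ℕ → ℝ) (u : ℝ) (k : ℕ) : ℝ := if k = 0 then 0 else p k * u ^ k

lemma thinned_nonneg {p : ℕ → ℝ} (hp : ∀ k, 0 ≤ p (k + 1)) {u : ℝ} (hu : 0 ≤ u) (k : ℕ) :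
    0 ≤ thinned p u k := by
  rcases k with _ | k
  · simp [thinned]
  · simpa [thinned] using mul_nonneg (hp k) (pow_nonneg hu _)

lemma rtot_thinned (p : ℕ → ℝ) (u : ℝ) : rtot (thinned p u) = u * genFunDeriv p u := by
  simp only [rtot, thinned, genFunDeriv, if_pos, Nat.add_one_ne_zero, if_false, max_self,
    zero_add, ← tsum_mul_left]
  exact tsum_congr fun k => by ring

lemma rcoord_thinned {p : ℕ → ℝ} (hp : ∀ k, 0 ≤ p (k + 1))
    (hμ : Summable fun k : ℕ => ((k + 1 : ℕ) : ℝ) * p (k + 1)) {u : ℝ} (hu : u ∈ Icc (0 : ℝ) 1)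
    {k : ℕ} (hk : k ≠ 0) : rcoord (thinned p u) k = k * p k * u ^ k / (u * genFunDeriv p u) := by
  have hG' : 0 ≤ genFunDeriv p u := tsum_nonneg fun j => by
    have := hp j; have := hu.1; positivity
  have hs : Summable fun j : ℕ => ((j + 1 : ℕ) : ℝ) * thinned p u (j + 1) :=
    (hμ.of_norm_bounded fun j => norm_mul_pow_le (mul_nonneg (Nat.cast_nonneg _) (hp j))
      (abs_le.2 ⟨by linarith [hu.1], hu.2⟩) (j + 1)).congr fun j => by
        simp only [thinned, Nat.add_one_ne_zero, if_false]; ring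
  rw [rcoord_of_summable hs (by rw [rtot_thinned]; exact mul_nonneg hu.1 hG') hk, rtot_thinned]
  simp [thinned, hk, mul_assoc]

-- The paper's `f₁ = F₁⁻¹` on `[0, 1]`, where `F₁ = 1 - G`.
def IsInvOneSub (G f : ℝ → ℝ) : Prop := ∀ t ∈ Icc (0 : ℝ) 1, f t ∈ Icc (0 : ℝ) 1 ∧ G (f t) = 1 - t

namespace IsInvOneSub

variable {G f : ℝ → ℝ}

lemma map_zero (hf : IsInvOneSub G f) (hG : StrictMonoOn G (Icc 0 1)) (hG1 : G 1 = 1) :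
    f 0 = 1 := by
  have h := hf 0 (left_mem_Icc.2 zero_le_one)
  exact hG.injOn h.1 (right_mem_Icc.2 zero_le_one) (by rw [h.2, hG1, sub_zero])

lemma map_one (hf : IsInvOneSub G f) (hG : StrictMonoOn G (Icc 0 1)) (hG0 : G 0 = 0) :
    f 1 = 0 := by
  have h := hf 1 (right_mem_Icc.2 zero_le_one)
  exact hG.injOn h.1 (left_mem_Icc.2 zero_le_one) (by rw [h.2, hG0, sub_self])

lemma mem_Ioo (hf : IsInvOneSub G f) (hG0 : G 0 = 0) (hG1 : G 1 = 1) {t : ℝ}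
    (ht : t ∈ Ioo 0 1) : f t ∈ Ioo 0 1 := by
  obtain ⟨⟨h0, h1⟩, hGt⟩ := hf t (Ioo_subset_Icc_self ht)
  refine ⟨h0.lt_of_ne fun h => ?_, h1.lt_of_ne fun h => ?_⟩
  · rw [← h, hG0] at hGt
    linarith [ht.2]
  · rw [h, hG1] at hGt
    linarith [ht.1]

lemma antitoneOn (hf : IsInvOneSub G f) (hG : StrictMonoOn G (Icc 0 1)) :
    AntitoneOn f (Icc 0 1) := by
  intro a ha b hb hab
  by_contra! h
  have hlt := hG (hf a ha).1 (hf b hb).1 h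
  rw [(hf a ha).2, (hf b hb).2] at hlt
  linarith

lemma surjOn (hf : IsInvOneSub G f) (hG : StrictMonoOn G (Icc 0 1)) (hG0 : G 0 = 0)
    (hG1 : G 1 = 1) : SurjOn f (Icc 0 1) (Icc 0 1) := by
  intro u hu
  have h0 := hG.monotoneOn (left_mem_Icc.2 zero_le_one) hu hu.1
  have h1 := hG.monotoneOn hu (right_mem_Icc.2 zero_le_one) hu.2
  rw [hG0] at h0
  rw [hG1] at h1
  have ht : 1 - G u ∈ Icc (0 : ℝ) 1 := ⟨by linarith, by linarith⟩
  exact ⟨1 - G u, ht, hG.injOn (hf _ ht).1 hu (by rw [(hf _ ht).2]; ring)⟩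

lemma continuousOn (hf : IsInvOneSub G f) (hG : StrictMonoOn G (Icc 0 1)) (hG0 : G 0 = 0)
    (hG1 : G 1 = 1) : ContinuousOn f (Icc 0 1) :=
  (hf.antitoneOn hG).continuousOn_of_surjOn_Icc (fun t ht => (hf t ht).1) (hf.surjOn hG hG0 hG1)

lemma hasDerivAt (hf : IsInvOneSub G f) (hcont : ContinuousOn f (Icc 0 1)) {t G' : ℝ}
    (ht : t ∈ Ioo 0 1) (hG' : HasDerivAt G G' (f t)) (hG'0 : G' ≠ 0) :
    HasDerivAt f (-G'⁻¹) t := by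
  have h := HasDerivAt.of_local_left_inverse (hcont.continuousAt (Icc_mem_nhds ht.1 ht.2))
    ((hasDerivAt_const _ 1).sub hG') (by simpa using hG'0)
    (eventually_of_mem (Ioo_mem_nhds ht.1 ht.2) fun y hy => by
      simp [(hf y (Ioo_subset_Icc_self hy)).2])
  simpa using h

lemma mapsTo_Ici (hf : IsInvOneSub G f) (hf' : ∀ t, 1 < t → f t = 0) :
    MapsTo f (Ici 0) (Icc 0 1) := fun t ht => by
  rcases le_or_gt t 1 with h | h
  · exact (hf t ⟨ht, h⟩).1
  · rw [hf' t h]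
    exact left_mem_Icc.2 zero_le_one

lemma antitoneOn_Ici (hf : IsInvOneSub G f) (hG : StrictMonoOn G (Icc 0 1))
    (hf' : ∀ t, 1 < t → f t = 0) : AntitoneOn f (Ici 0) := by
  intro a ha b hb hab
  rcases le_or_gt b 1 with hb1 | hb1
  · exact hf.antitoneOn hG ⟨ha, hab.trans hb1⟩ ⟨hb, hb1⟩ hab
  · rw [hf' b hb1]
    exact (hf.mapsTo_Ici hf' ha).1

end IsInvOneSub

section ExplicitSolution

variable {p : ℕ → ℝ} {f : ℝ → ℝ}

lemma hasDerivAt_mul_pow (hp : ∀ k, 0 ≤ p (k + 1)) (hp1 : ∑' k : ℕ, p (k + 1) = 1)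
    (hμ : Summable fun k : ℕ => ((k + 1 : ℕ) : ℝ) * p (k + 1)) (hf : IsInvOneSub (genFun p) f)
    {k : ℕ} (hk : k ≠ 0) {t : ℝ} (ht : t ∈ Ioo 0 1) :
    HasDerivAt (fun s => p k * f s ^ k) (-rcoord (thinned p (f t)) k) t := by
  have hG := strictMonoOn_genFun hp hp1
  have hG1 : genFun p 1 = 1 := genFun_one.trans hp1
  obtain ⟨hf0, hf1⟩ := hf.mem_Ioo genFun_zero hG1 ht
  have hD := genFunDeriv_pos hp hp1 hμ hf0 hf1.le
  have hder := hf.hasDerivAt (hf.continuousOn hG genFun_zero hG1) ht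
    (hasDerivAt_genFun hp hμ ⟨by linarith, hf1⟩) hD.ne'
  refine (((hasDerivAt_pow k (f t)).comp t hder).const_mul (p k)).congr_deriv ?_
  rw [rcoord_thinned hp hμ ⟨hf0.le, hf1.le⟩ hk]
  obtain ⟨j, rfl⟩ := Nat.exists_eq_add_one_of_ne_zero hk
  rw [Nat.add_sub_cancel]
  field_simp
  ring

lemma integral_rcoord_thinned_of_le_one (hp : ∀ k, 0 ≤ p (k + 1))
    (hp1 : ∑' k : ℕ, p (k + 1) = 1) (hμ : Summable fun k : ℕ => ((k + 1 : ℕ) : ℝ) * p (k + 1))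
    (hf : IsInvOneSub (genFun p) f) {k : ℕ} (hk : k ≠ 0) {t : ℝ} (ht : t ∈ Icc (0 : ℝ) 1) :
    IntervalIntegrable (fun s => rcoord (thinned p (f s)) k) volume 0 t ∧
      ∫ s in (0 : ℝ)..t, rcoord (thinned p (f s)) k = p k - p k * f t ^ k := by
  have hG := strictMonoOn_genFun hp hp1
  have hG1 : genFun p 1 = 1 := genFun_one.trans hp1
  have hcont : ContinuousOn (fun s => -(p k * f s ^ k)) (Icc 0 t) :=
    ((continuousOn_const.mul ((hf.continuousOn hG genFun_zero hG1).pow k)).neg).mono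
      (Icc_subset_Icc_right ht.2)
  have hderiv : ∀ s ∈ Ioo 0 t,
      HasDerivAt (fun s => -(p k * f s ^ k)) (rcoord (thinned p (f s)) k) s := fun s hs => by
    simpa using (hasDerivAt_mul_pow hp hp1 hμ hf hk ⟨hs.1, hs.2.trans_le ht.2⟩).fun_neg
  have hnonneg : ∀ s ∈ Ioo 0 t, 0 ≤ rcoord (thinned p (f s)) k := fun s hs =>
    (rcoord_mem_Icc (fun j => thinned_nonneg hp (hf s ⟨hs.1.le, hs.2.le.trans ht.2⟩).1.1 _) k).1
  have hint : IntervalIntegrable (fun s => rcoord (thinned p (f s)) k) volume 0 t :=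
    (intervalIntegrable_iff_integrableOn_Ioc_of_le ht.1).2
      (intervalIntegral.integrableOn_deriv_of_nonneg hcont hderiv hnonneg)
  refine ⟨hint, ?_⟩
  rw [intervalIntegral.integral_eq_sub_of_hasDerivAt_of_le ht.1 hcont hderiv hint,
    hf.map_zero hG hG1]
  ring

lemma integral_rcoord_thinned (hp : ∀ k, 0 ≤ p (k + 1)) (hp1 : ∑' k : ℕ, p (k + 1) = 1)
    (hμ : Summable fun k : ℕ => ((k + 1 : ℕ) : ℝ) * p (k + 1)) (hf : IsInvOneSub (genFun p) f)
    (hf' : ∀ t, 1 < t → f t = 0) {k : ℕ} (hk : k ≠ 0) {t : ℝ} (ht : 0 ≤ t) :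
    IntervalIntegrable (fun s => rcoord (thinned p (f s)) k) volume 0 t ∧
      ∫ s in (0 : ℝ)..t, rcoord (thinned p (f s)) k = p k - p k * f t ^ k := by
  rcases le_or_gt t 1 with h1 | h1
  · exact integral_rcoord_thinned_of_le_one hp hp1 hμ hf hk ⟨ht, h1⟩
  have hG := strictMonoOn_genFun hp hp1
  have hzero : EqOn (fun s => rcoord (thinned p (f s)) k) 0 (uIcc 1 t) := fun s hs => by
    rw [uIcc_of_le h1.le] at hs
    have hfs : f s = 0 := hs.1.eq_or_lt.elim (fun h => h ▸ hf.map_one hG genFun_zero) (hf' s)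
    simp [rcoord_thinned hp hμ (left_mem_Icc.2 zero_le_one) hk, hfs]
  obtain ⟨hint, hI⟩ := integral_rcoord_thinned_of_le_one hp hp1 hμ hf hk
    (right_mem_Icc.2 zero_le_one)
  have hint' : IntervalIntegrable (fun s => rcoord (thinned p (f s)) k) volume 1 t :=
    intervalIntegrable_const.congr fun s hs => (hzero (uIoc_subset_uIcc hs)).symm
  refine ⟨hint.trans hint', ?_⟩
  rw [← intervalIntegral.integral_add_adjacent_intervals hint hint', hI,
    intervalIntegral.integral_congr hzero, hf.map_one hG genFun_zero, hf' t h1]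
  simp [hk]

lemma isFluidSolution_of_eqOn_thinned {T : ℝ} {ζ : ℝ → ℕ → ℝ} (hT : 0 ≤ T)
    (hp : ∀ k, 0 ≤ p (k + 1)) (hp1 : ∑' k : ℕ, p (k + 1) = 1)
    (hμ : Summable fun k : ℕ => ((k + 1 : ℕ) : ℝ) * p (k + 1)) (hf : IsInvOneSub (genFun p) f)
    (hf' : ∀ t, 1 < t → f t = 0) (hζ : EqOn ζ (fun t => thinned p (f t)) (Icc 0 T)) :
    IsFluidSolution T p ζ where
  nonneg t ht k _ := by
    rw [hζ ht]
    exact thinned_nonneg hp (hf.mapsTo_Ici hf' ht.1).1 k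
  integrableOn k hk := by
    have h := (integral_rcoord_thinned hp hp1 hμ hf hf' (Nat.one_le_iff_ne_zero.1 hk) hT).1
    rw [intervalIntegrable_iff_integrableOn_Ioc_of_le hT, ← integrableOn_Icc_iff_integrableOn_Ioc]
      at h
    exact h.congr_fun (fun s hs => by rw [hζ hs]) measurableSet_Icc
  eq_sub_integral k hk t ht := by
    have hk0 := Nat.one_le_iff_ne_zero.1 hk
    rw [intervalIntegral.integral_congr (g := fun s => rcoord (thinned p (f s)) k) fun s hs => ?_,
      (integral_rcoord_thinned hp hp1 hμ hf hf' hk0 ht.1).2, hζ ht]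
    · simp [thinned, hk0]
    · rw [uIcc_of_le ht.1] at hs
      rw [hζ ⟨hs.1, hs.2.trans ht.2⟩]

end ExplicitSolution

lemma sub_two_mul_pow_sub_pow_le {v w : ℝ} (hw : 0 ≤ w) (hwv : w ≤ v) (hv : v ≤ 1) (j : ℕ) :
    (((j + 1 : ℕ) : ℝ) - 2) * (v ^ (j + 1) - w ^ (j + 1)) ≤
      ((j + 1 : ℕ) : ℝ) * (((j + 1 : ℕ) : ℝ) - 2) * (v ^ 2 * (v - w)) := by
  have hv0 : 0 ≤ v := hw.trans hwv
  match j with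
  | 0 =>
    have : v ^ 2 ≤ 1 := pow_le_one₀ hv0 hv
    norm_num
    nlinarith [sub_nonneg.2 hwv]
  | 1 => norm_num
  | j + 2 =>
    have hpow : v ^ (j + 3) - w ^ (j + 3) ≤ (v - w) * (j + 3) * v ^ 2 := by
      have h := abs_pow_sub_pow_le v w (j + 3)
      rw [abs_of_nonneg (hw.trans hwv), abs_of_nonneg hw, max_eq_left hwv,
        abs_of_nonneg (sub_nonneg.2 hwv)] at h
      calc v ^ (j + 3) - w ^ (j + 3) ≤ |v ^ (j + 3) - w ^ (j + 3)| := le_abs_self _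
        _ ≤ (v - w) * ↑(j + 3) * v ^ (j + 3 - 1) := h
        _ ≤ (v - w) * (j + 3) * v ^ 2 := by
          rw [show j + 3 - 1 = j + 2 by omega]
          push_cast
          exact mul_le_mul_of_nonneg_left (pow_le_pow_of_le_one hv0 hv (by omega))
            (mul_nonneg (sub_nonneg.2 hwv) (by positivity))
    have hc : (0 : ℝ) ≤ ((j + 2 + 1 : ℕ) : ℝ) - 2 := by
      push_cast
      linarith [(j.cast_nonneg : (0 : ℝ) ≤ j)]
    calc (((j + 2 + 1 : ℕ) : ℝ) - 2) * (v ^ (j + 2 + 1) - w ^ (j + 2 + 1))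
        ≤ (((j + 2 + 1 : ℕ) : ℝ) - 2) * ((v - w) * (j + 3) * v ^ 2) :=
          mul_le_mul_of_nonneg_left hpow hc
      _ = _ := by push_cast; ring

lemma tsum_sub_two_mul_pow_sub_pow_nonpos {p : ℕ → ℝ} (hp : ∀ k, 0 ≤ p (k + 1))
    (hp2 : Summable fun k : ℕ => ((k + 1 : ℕ) : ℝ) ^ 2 * p (k + 1))
    (hsub : ∑' k : ℕ, ((k + 1 : ℕ) : ℝ) * (((k + 1 : ℕ) : ℝ) - 2) * p (k + 1) ≤ 0)
    {v w : ℝ} (hw : 0 ≤ w) (hwv : w ≤ v) (hv : v ≤ 1) :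
    ∑' j : ℕ, (((j + 1 : ℕ) : ℝ) - 2) * (p (j + 1) * (v ^ (j + 1) - w ^ (j + 1))) ≤ 0 := by
  have hv0 : 0 ≤ v := hw.trans hwv
  have hL : Summable fun j : ℕ =>
      (((j + 1 : ℕ) : ℝ) - 2) * (p (j + 1) * (v ^ (j + 1) - w ^ (j + 1))) :=
    summable_natCast_sub_two_mul (summable_natCast_succ_mul_of_sq hp hp2) fun j =>
      ⟨mul_nonneg (hp j) (sub_nonneg.2 (pow_le_pow_left₀ hw hwv _)),
        mul_le_of_le_one_right (hp j) ((sub_le_self _ (pow_nonneg hw _)).trans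
          (pow_le_one₀ hv0 hv))⟩
  have hR : Summable fun j : ℕ => ((j + 1 : ℕ) : ℝ) * (((j + 1 : ℕ) : ℝ) - 2) * p (j + 1) :=
    hp2.of_norm_bounded fun j => by
      rw [Real.norm_eq_abs, abs_mul, abs_mul, abs_of_nonneg (hp j),
        abs_of_nonneg (Nat.cast_nonneg _), sq]
      exact mul_le_mul_of_nonneg_right
        (mul_le_mul_of_nonneg_left (abs_natCast_succ_sub_two_le j) (Nat.cast_nonneg _)) (hp j)
  calc ∑' j : ℕ, (((j + 1 : ℕ) : ℝ) - 2) * (p (j + 1) * (v ^ (j + 1) - w ^ (j + 1)))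
      ≤ ∑' j : ℕ, ((j + 1 : ℕ) : ℝ) * (((j + 1 : ℕ) : ℝ) - 2) * p (j + 1) * (v ^ 2 * (v - w)) :=
        hL.tsum_le_tsum (fun j => by
          nlinarith [mul_le_mul_of_nonneg_left (sub_two_mul_pow_sub_pow_le hw hwv hv j) (hp j)])
          (hR.mul_right _)
    _ = (∑' j : ℕ, ((j + 1 : ℕ) : ℝ) * (((j + 1 : ℕ) : ℝ) - 2) * p (j + 1)) * (v ^ 2 * (v - w)) :=
        tsum_mul_right
    _ ≤ 0 := mul_nonpos_of_nonpos_of_nonneg hsub (by have := sub_nonneg.2 hwv; positivity)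

lemma antitoneOn_tsum_sub_two_mul {p : ℕ → ℝ} (hp : ∀ k, 0 ≤ p (k + 1))
    (hp2 : Summable fun k : ℕ => ((k + 1 : ℕ) : ℝ) ^ 2 * p (k + 1))
    (hsub : ∑' k : ℕ, ((k + 1 : ℕ) : ℝ) * (((k + 1 : ℕ) : ℝ) - 2) * p (k + 1) ≤ 0)
    {f : ℝ → ℝ} {s : Set ℝ} (hf : AntitoneOn f s) (hfs : MapsTo f s (Icc 0 1)) :
    AntitoneOn
      (fun t => ∑' j : ℕ, (((j + 1 : ℕ) : ℝ) - 2) * (p (j + 1) - p (j + 1) * f t ^ (j + 1))) s := by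
  have hsum : ∀ u ∈ Icc (0 : ℝ) 1, Summable fun j : ℕ =>
      (((j + 1 : ℕ) : ℝ) - 2) * (p (j + 1) - p (j + 1) * u ^ (j + 1)) := fun u hu =>
    summable_natCast_sub_two_mul (summable_natCast_succ_mul_of_sq hp hp2) fun j =>
      ⟨sub_nonneg.2 (mul_le_of_le_one_right (hp j) (pow_le_one₀ hu.1 hu.2)),
        sub_le_self _ (mul_nonneg (hp j) (pow_nonneg hu.1 _))⟩
  intro a ha b hb hab
  rw [← sub_nonpos, ← (hsum _ (hfs hb)).tsum_sub (hsum _ (hfs ha))]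
  refine le_of_eq_of_le (tsum_congr fun j => by ring)
    (tsum_sub_two_mul_pow_sub_pow_nonpos hp hp2 hsub (hfs hb).1 (hf ha hb hab) (hfs ha).2)

theorem stmt10_general (T : ℝ) (hT : 0 < T) (p : ℕ → ℝ)
    (hp : ∀ k, 1 ≤ k → 0 ≤ p k)
    (hp1 : (∑' k : ℕ, p (k + 1)) = 1)
    (hp2 : Summable (fun k : ℕ => ((k + 1 : ℕ) : ℝ) ^ 2 * p (k + 1)))
    (hsub : (∑' k : ℕ, ((k + 1 : ℕ) : ℝ) * (((k + 1 : ℕ) : ℝ) - 2) * p (k + 1)) ≤ 0)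
    (G0 : ℝ → ℝ)
    (hG0 : ∀ u ∈ Set.Icc (0 : ℝ) 1, G0 u = ∑' k : ℕ, p (k + 1) * u ^ (k + 1))
    (f1 : ℝ → ℝ)
    (hf1 : ∀ t ∈ Set.Icc (0 : ℝ) 1, f1 t ∈ Set.Icc (0 : ℝ) 1 ∧ 1 - G0 (f1 t) = t)
    (hf1' : ∀ t : ℝ, 1 < t → f1 t = 0)
    (ζ : ℝ → ℕ → ℝ) (ψ : ℝ → ℝ)
    (hζ0 : ∀ t ∈ Set.Icc (0 : ℝ) T, ζ t 0 = 0)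
    (hζk : ∀ t ∈ Set.Icc (0 : ℝ) T, ∀ k : ℕ, 1 ≤ k → ζ t k = p k * f1 t ^ k)
    (hψ : ∀ t ∈ Set.Icc (0 : ℝ) T,
      ψ t = -2 * (∫ s in (0 : ℝ)..t, rcoord (ζ s) 0) +
        ∑' k : ℕ, (((k + 1 : ℕ) : ℝ) - 2) * (p (k + 1) - ζ t (k + 1))) :
    memCT T p ζ ψ ∧ IT T p ζ ψ = 0 := by
  have hp' : ∀ k, 0 ≤ p (k + 1) := fun k => hp _ (Nat.le_add_left 1 k)
  have hμ := summable_natCast_succ_mul_of_sq hp' hp2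
  have hf : IsInvOneSub (genFun p) f1 := fun t ht =>
    ⟨(hf1 t ht).1, by rw [genFun, ← hG0 _ (hf1 t ht).1]; linarith [(hf1 t ht).2]⟩
  have hG := strictMonoOn_genFun hp' hp1
  have hζ : EqOn ζ (fun t => thinned p (f1 t)) (Icc 0 T) := fun t ht => funext fun k => by
    rcases k with _ | k
    · simp [thinned, hζ0 t ht]
    · simp [thinned, hζk t ht (k + 1) (Nat.le_add_left 1 k)]
  have hanti := antitoneOn_tsum_sub_two_mul hp' hp2 hsub
    ((hf.antitoneOn_Ici hG hf1').mono (Icc_subset_Ici_self : Icc (0 : ℝ) T ⊆ Ici 0))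
    ((hf.mapsTo_Ici hf1').mono_left Icc_subset_Ici_self)
  refine (isFluidSolution_of_eqOn_thinned hT.le hp' hp1 hμ hf hf1' hζ).memCT_and_IT_eq_zero
    hT.le hμ hζ0 hψ (hanti.congr fun t ht => tsum_congr fun j => ?_)
  rw [hζk t ht (j + 1) (Nat.le_add_left 1 j)]

/-- LLN trajectory in the (sub)critical case ∑ k(k−2)p_k ≤ 0:
the explicitly given pair (ζ, ψ) lies in C_T and satisfies I_T(ζ, ψ) = 0. -/
theorem stmt10 (T : ℝ) (hT : 0 < T) (p : ℕ → ℝ)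
    (hp : ∀ k, 1 ≤ k → 0 ≤ p k)
    (hp1 : (∑' k : ℕ, p (k + 1)) = 1)
    (hp2 : Summable (fun k : ℕ => ((k + 1 : ℕ) : ℝ) ^ 2 * p (k + 1)))
    (hsub : (∑' k : ℕ, ((k + 1 : ℕ) : ℝ) * (((k + 1 : ℕ) : ℝ) - 2) * p (k + 1)) ≤ 0)
    (μ : ℝ) (hμ : μ = ∑' k : ℕ, ((k + 1 : ℕ) : ℝ) * p (k + 1))
    (hTμ : μ / 2 ≤ T)
    (G0 : ℝ → ℝ)
    (hG0 : ∀ u ∈ Set.Icc (0 : ℝ) 1, G0 u = ∑' k : ℕ, p (k + 1) * u ^ (k + 1))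
    (f1 : ℝ → ℝ)
    (hf1 : ∀ t ∈ Set.Icc (0 : ℝ) 1, f1 t ∈ Set.Icc (0 : ℝ) 1 ∧ 1 - G0 (f1 t) = t)
    (hf1' : ∀ t : ℝ, 1 < t → f1 t = 0)
    (ζ : ℝ → ℕ → ℝ) (ψ : ℝ → ℝ)
    (hζ0 : ∀ t ∈ Set.Icc (0 : ℝ) T, ζ t 0 = 0)
    (hζk : ∀ t ∈ Set.Icc (0 : ℝ) T, ∀ k : ℕ, 1 ≤ k → ζ t k = p k * f1 t ^ k)
    (hψ : ∀ t ∈ Set.Icc (0 : ℝ) T,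
      ψ t = -2 * (∫ s in (0 : ℝ)..t, rcoord (ζ s) 0) +
        ∑' k : ℕ, (((k + 1 : ℕ) : ℝ) - 2) * (p (k + 1) - ζ t (k + 1))) :
    memCT T p ζ ψ ∧ IT T p ζ ψ = 0 :=
  stmt10_general T hT p hp hp1 hp2 hsub G0 hG0 f1 hf1 hf1' ζ ψ hζ0 hζk hψ
end

section
/- Assume in addition that ∑_{k≥1} k^{1+ε}·p_k < ∞ for some ε > 0. Then for every (ζ, ψ) ∈ C_T with I_T(ζ, ψ) < ∞, the infimum defining I_T is attained: there exists φ ∈ S_T(ζ, ψ) with ∑_{k≥0} ∫_{[0,T]×[0,1]} ℓ(φ_k(s,y)) ds dy = I_T(ζ, ψ). -/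
/-!
Averaging a control on each time slice over its active window `y < r_k(ζ(s))`, and setting it
to `1` (where `ℓ` vanishes) off the window, keeps it in `S_T(ζ, ψ)` and, by Jensen's inequality
for the convex function `ℓ`, does not increase its cost. The averaged control depends only on the
flux `s ↦ ∫₀¹ 1{y < r_k(ζ(s))} φ_k(s, y) dy`, and all controls in `S_T(ζ, ψ)` of finite cost have
the same fluxes almost everywhere: the primitive of the flux is `p_k - ζ_k` for `k ≥ 1`, and for
`k = 0` it is read off from `ψ` after subtracting the other terms, which are summable because
`∑ k p_k < ∞`; finite cost makes the fluxes integrable, and Lebesgue differentiation concludes.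
Hence the averaged version of any control of finite cost is a minimiser.
-/

open MeasureTheory
open scoped ENNReal

open Set InformationTheory

lemma ellFn_eq_klFun : ellFn = klFun := by
  funext u
  rw [ellFn, klFun_apply]
  ring

lemma le_klFun_add_exp_two {u : ℝ} (hu : 0 ≤ u) : u ≤ klFun u + Real.exp 2 := by
  rcases le_or_gt u (Real.exp 2) with h | h
  · linarith [klFun_nonneg hu]
  · have hlog : 2 ≤ Real.log u := (Real.le_log_iff_exp_le ((Real.exp_pos 2).trans h)).2 h.le
    rw [klFun_apply]
    nlinarith [mul_le_mul_of_nonneg_left hlog hu, Real.exp_pos 2]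

lemma ofReal_klFun_setAverage_mul_le {α : Type*} [MeasurableSpace α] {μ : Measure α}
    {t : Set α} (ht : μ t ≠ ⊤) {h : α → ℝ} (hm : AEStronglyMeasurable h (μ.restrict t))
    (h0 : ∀ x, 0 ≤ h x) :
    ENNReal.ofReal (klFun (⨍ x in t, h x ∂μ)) * μ t
      ≤ ∫⁻ x in t, ENNReal.ofReal (klFun (h x)) ∂μ := by
  rcases eq_or_ne (μ t) 0 with ht0 | ht0
  · simp [ht0]
  by_cases htop : ∫⁻ x in t, ENNReal.ofReal (klFun (h x)) ∂μ = ⊤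
  · simp [htop]
  have hkl_int : IntegrableOn (klFun ∘ h) t μ :=
    ⟨continuous_klFun.comp_aestronglyMeasurable hm,
      (hasFiniteIntegral_iff_ofReal (ae_of_all _ fun x => klFun_nonneg (h0 x))).2
        (lt_top_iff_ne_top.2 htop)⟩
  have h_int : IntegrableOn h t μ :=
    (hkl_int.add (integrableOn_const (C := Real.exp 2) ht)).mono' hm (ae_of_all _ fun x => by
      rw [Real.norm_of_nonneg (h0 x)]
      exact le_klFun_add_exp_two (h0 x))
  have hjensen := convexOn_klFun.map_set_average_le continuous_klFun.continuousOn isClosed_Ici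
    ht0 ht (ae_of_all _ fun x => mem_Ici.2 (h0 x)) h_int hkl_int
  have hμt : 0 < μ.real t := ENNReal.toReal_pos ht0 ht
  rw [setAverage_eq μ (fun x => klFun (h x)), smul_eq_mul, le_inv_mul_iff₀ hμt] at hjensen
  calc ENNReal.ofReal (klFun (⨍ x in t, h x ∂μ)) * μ t
      = ENNReal.ofReal (μ.real t * klFun (⨍ x in t, h x ∂μ)) := by
        rw [mul_comm, ENNReal.ofReal_mul hμt.le, measureReal_def, ENNReal.ofReal_toReal ht]
    _ ≤ ENNReal.ofReal (∫ x in t, klFun (h x) ∂μ) := ENNReal.ofReal_le_ofReal hjensen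
    _ = ∫⁻ x in t, ENNReal.ofReal (klFun (h x)) ∂μ :=
        ofReal_integral_eq_lintegral_ofReal hkl_int (ae_of_all _ fun x => klFun_nonneg (h0 x))

lemma ae_restrict_Icc_eq_of_forall_integral_eq {f g : ℝ → ℝ} {a b : ℝ}
    (hf : IntegrableOn f (Icc a b)) (hg : IntegrableOn g (Icc a b))
    (h : ∀ t ∈ Icc a b, ∫ s in a..t, f s = ∫ s in a..t, g s) :
    ∀ᵐ x ∂volume.restrict (Icc a b), f x = g x := by
  rcases lt_or_ge b a with hba | hab
  · simp [Icc_eq_empty_of_lt hba]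
  rw [← uIcc_of_le hab] at hf hg
  rw [← ae_restrict_congr_set Ioo_ae_eq_Icc, ae_restrict_iff' measurableSet_Ioo]
  filter_upwards [hf.intervalIntegrable.ae_hasDerivAt_integral,
    hg.intervalIntegrable.ae_hasDerivAt_integral] with x hfx hgx hx
  have hxI : x ∈ uIcc a b := by rw [uIcc_of_le hab]; exact Ioo_subset_Icc_self hx
  have hprim : (fun t => ∫ s in a..t, f s) =ᶠ[nhds x] fun t => ∫ s in a..t, g s :=
    Filter.eventually_of_mem (Ioo_mem_nhds hx.1 hx.2) fun t ht => h t (Ioo_subset_Icc_self ht)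
  exact (hfx hxI a left_mem_uIcc).unique
    ((hgx hxI a left_mem_uIcc).congr_of_eventuallyEq hprim)

section Flatten

variable {r : ℝ → ℝ} {f g : ℝ → ℝ → ℝ}

noncomputable def flux (r : ℝ → ℝ) (f : ℝ → ℝ → ℝ) (s : ℝ) : ℝ :=
  ∫ y in (0 : ℝ)..1, if y < r s then f s y else 0

noncomputable def flatten (r : ℝ → ℝ) (f : ℝ → ℝ → ℝ) (s y : ℝ) : ℝ :=
  if y < r s then flux r f s / r s else 1

lemma flux_eq_setIntegral {s : ℝ} (hr : r s ≤ 1) : flux r f s = ∫ y in Ioo 0 (r s), f s y := by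
  have hwindow : Ioc (0 : ℝ) 1 ∩ Iio (r s) = Ioo 0 (r s) := by
    ext y
    simp only [mem_inter_iff, mem_Ioc, mem_Iio, mem_Ioo]
    constructor
    · rintro ⟨⟨hy0, -⟩, hyr⟩
      exact ⟨hy0, hyr⟩
    · rintro ⟨hy0, hyr⟩
      exact ⟨⟨hy0, (hyr.trans_le hr).le⟩, hyr⟩
  rw [flux, intervalIntegral.integral_of_le zero_le_one, ← hwindow,
    ← setIntegral_indicator measurableSet_Iio]
  rfl

lemma flux_div_eq_setAverage {s : ℝ} (hr0 : 0 ≤ r s) (hr1 : r s ≤ 1) :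
    flux r f s / r s = ⨍ y in Ioo 0 (r s), f s y := by
  rw [flux_eq_setIntegral hr1, setAverage_eq, Real.volume_real_Ioo_of_le hr0, sub_zero,
    smul_eq_mul, div_eq_inv_mul]

lemma flux_nonneg (hf0 : ∀ s y, 0 ≤ f s y) (s : ℝ) : 0 ≤ flux r f s :=
  intervalIntegral.integral_nonneg zero_le_one fun y _ => by
    split_ifs
    exacts [hf0 s y, le_rfl]

lemma measurable_flux (hr : Measurable r) (hf : Measurable (Function.uncurry f)) :
    Measurable (flux r f) := by
  have hint : Measurable fun q : ℝ × ℝ => if q.2 < r q.1 then f q.1 q.2 else 0 :=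
    Measurable.ite (measurableSet_lt measurable_snd (hr.comp measurable_fst)) hf measurable_const
  unfold flux
  simp_rw [intervalIntegral.integral_of_le zero_le_one]
  exact hint.stronglyMeasurable.integral_prod_right'.measurable

lemma measurable_flatten (hr : Measurable r) (hf : Measurable (Function.uncurry f)) :
    Measurable (Function.uncurry (flatten r f)) :=
  Measurable.ite (measurableSet_lt measurable_snd (hr.comp measurable_fst))
    (((measurable_flux hr hf).comp measurable_fst).div (hr.comp measurable_fst)) measurable_const

lemma flatten_nonneg (hr0 : ∀ s, 0 ≤ r s) (hf0 : ∀ s y, 0 ≤ f s y) (s y : ℝ) :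
    0 ≤ flatten r f s y := by
  unfold flatten
  split_ifs
  exacts [div_nonneg (flux_nonneg hf0 s) (hr0 s), zero_le_one]

lemma flux_flatten {s : ℝ} (hr0 : 0 ≤ r s) (hr1 : r s ≤ 1) :
    flux r (flatten r f) s = flux r f s := by
  have hconst : EqOn (flatten r f s) (fun _ => flux r f s / r s) (Ioo 0 (r s)) :=
    fun y hy => if_pos hy.2
  rw [flux_eq_setIntegral hr1, setIntegral_congr_fun measurableSet_Ioo hconst, setIntegral_const,
    Real.volume_real_Ioo_of_le hr0, sub_zero, smul_eq_mul]
  rcases hr0.eq_or_lt with hr | hr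
  · simp [flux_eq_setIntegral hr1, ← hr]
  · exact mul_div_cancel₀ _ hr.ne'

lemma lintegral_klFun_flatten {s : ℝ} (hr1 : r s ≤ 1) :
    ∫⁻ y in Icc 0 1, ENNReal.ofReal (klFun (flatten r f s y))
      = ENNReal.ofReal (klFun (flux r f s / r s)) * volume (Ioo 0 (r s)) := by
  have hind : (fun y => ENNReal.ofReal (klFun (flatten r f s y)))
      = (Iio (r s)).indicator fun _ => ENNReal.ofReal (klFun (flux r f s / r s)) := by
    funext y
    by_cases hy : y < r s <;> simp [flatten, hy, klFun_one]
  have hwindow : (Iio (r s) ∩ Icc 0 1 : Set ℝ) =ᵐ[volume] Ioo 0 (r s) := by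
    have : Iio (r s) ∩ Icc 0 1 = Ico 0 (r s) := by
      ext y
      simp only [mem_inter_iff, mem_Iio, mem_Icc, mem_Ico]
      constructor
      · rintro ⟨hyr, hy0, -⟩
        exact ⟨hy0, hyr⟩
      · rintro ⟨hy0, hyr⟩
        exact ⟨hyr, hy0, (hyr.trans_le hr1).le⟩
    rw [this]
    exact Ioo_ae_eq_Ico.symm
  rw [hind, lintegral_indicator_const measurableSet_Iio, Measure.restrict_apply measurableSet_Iio,
    measure_congr hwindow]

lemma ofReal_flux_le (hf0 : ∀ s y, 0 ≤ f s y) (s : ℝ) :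
    ENNReal.ofReal (flux r f s)
      ≤ (∫⁻ y in Icc 0 1, ENNReal.ofReal (klFun (f s y))) + ENNReal.ofReal (Real.exp 2) := by
  have hwindow : ∀ y, ‖if y < r s then f s y else 0‖ₑ ≤ ENNReal.ofReal (f s y) := fun y => by
    split_ifs
    · rw [Real.enorm_of_nonneg (hf0 s y)]
    · simp
  calc ENNReal.ofReal (flux r f s)
      ≤ ‖flux r f s‖ₑ := by
        rw [Real.enorm_of_nonneg (flux_nonneg hf0 s)]
    _ ≤ ∫⁻ y in Ioc 0 1, ‖if y < r s then f s y else 0‖ₑ := by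
        rw [flux, intervalIntegral.integral_of_le zero_le_one]
        exact enorm_integral_le_lintegral_enorm _
    _ ≤ ∫⁻ y in Icc 0 1, ENNReal.ofReal (f s y) :=
        (lintegral_mono hwindow).trans (lintegral_mono_set Ioc_subset_Icc_self)
    _ ≤ ∫⁻ y in Icc 0 1, (ENNReal.ofReal (klFun (f s y)) + ENNReal.ofReal (Real.exp 2)) :=
        lintegral_mono fun y => by
          rw [← ENNReal.ofReal_add (klFun_nonneg (hf0 s y)) (Real.exp_pos 2).le]
          exact ENNReal.ofReal_le_ofReal (le_klFun_add_exp_two (hf0 s y))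
    _ = _ := by
        rw [lintegral_add_right _ measurable_const, setLIntegral_const, Real.volume_Icc,
          sub_zero, ENNReal.ofReal_one, mul_one]

lemma integrableOn_flux {T : ℝ} (hr : Measurable r) (hf : Measurable (Function.uncurry f))
    (hf0 : ∀ s y, 0 ≤ f s y)
    (hcost : ∫⁻ s in Icc 0 T, ∫⁻ y in Icc 0 1, ENNReal.ofReal (klFun (f s y)) ≠ ⊤) :
    IntegrableOn (flux r f) (Icc 0 T) := by
  refine ⟨(measurable_flux hr hf).aestronglyMeasurable,
    (hasFiniteIntegral_iff_ofReal (ae_of_all _ (flux_nonneg hf0))).2 ?_⟩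
  calc ∫⁻ s in Icc 0 T, ENNReal.ofReal (flux r f s)
      ≤ ∫⁻ s in Icc 0 T,
          ((∫⁻ y in Icc 0 1, ENNReal.ofReal (klFun (f s y))) + ENNReal.ofReal (Real.exp 2)) :=
        lintegral_mono (ofReal_flux_le hf0)
    _ < ⊤ := by
        rw [lintegral_add_right _ measurable_const, setLIntegral_const, Real.volume_Icc]
        exact ENNReal.add_lt_top.2 ⟨hcost.lt_top, ENNReal.mul_lt_top ENNReal.ofReal_lt_top
          ENNReal.ofReal_lt_top⟩

lemma lintegral_klFun_flatten_le {s : ℝ} (hr0 : 0 ≤ r s) (hr1 : r s ≤ 1)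
    (hg : Measurable (g s)) (hg0 : ∀ y, 0 ≤ g s y) (hflux : flux r g s = flux r f s) :
    ∫⁻ y in Icc 0 1, ENNReal.ofReal (klFun (flatten r f s y))
      ≤ ∫⁻ y in Icc 0 1, ENNReal.ofReal (klFun (g s y)) :=
  calc ∫⁻ y in Icc 0 1, ENNReal.ofReal (klFun (flatten r f s y))
      = ENNReal.ofReal (klFun (⨍ y in Ioo 0 (r s), g s y)) * volume (Ioo 0 (r s)) := by
        rw [lintegral_klFun_flatten hr1, ← hflux, flux_div_eq_setAverage hr0 hr1]
    _ ≤ ∫⁻ y in Ioo 0 (r s), ENNReal.ofReal (klFun (g s y)) :=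
        ofReal_klFun_setAverage_mul_le measure_Ioo_lt_top.ne hg.aestronglyMeasurable hg0
    _ ≤ ∫⁻ y in Icc 0 1, ENNReal.ofReal (klFun (g s y)) :=
        lintegral_mono_set fun y hy => ⟨hy.1.le, (hy.2.trans_le hr1).le⟩

end Flatten

lemma summable_mul_of_summable_rpow_mul {p : ℕ → ℝ} {ε : ℝ} (hp : ∀ k, 1 ≤ k → 0 ≤ p k)
    (hε : 0 ≤ ε) (hmom : Summable fun k : ℕ => ((k + 1 : ℕ) : ℝ) ^ (1 + ε) * p (k + 1)) :
    Summable fun k : ℕ => ((k + 1 : ℕ) : ℝ) * p (k + 1) :=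
  hmom.of_nonneg_of_le (fun k => mul_nonneg k.succ.cast_nonneg (hp _ k.succ_pos))
    fun k => mul_le_mul_of_nonneg_right
      (Real.self_le_rpow_of_one_le (Nat.one_le_cast.2 k.succ_pos) (by linarith))
      (hp _ k.succ_pos)

section Rates

variable {x : ℕ → ℝ}

lemma rcoord_nonneg (hx : ∀ k, 1 ≤ k → 0 ≤ x k) (k : ℕ) : 0 ≤ rcoord x k := by
  unfold rcoord
  split_ifs with hpos hk
  · exact div_nonneg (le_max_right _ _) hpos.1.le
  · exact div_nonneg (mul_nonneg k.cast_nonneg (hx k (Nat.one_le_iff_ne_zero.2 hk))) hpos.1.le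
  · exact le_rfl

lemma rcoord_le_one (hx : ∀ k, 1 ≤ k → 0 ≤ x k) (k : ℕ) : rcoord x k ≤ 1 := by
  unfold rcoord
  split_ifs with hpos hk
  · rw [div_le_one hpos.1, rtot, le_add_iff_nonneg_right]
    exact tsum_nonneg fun j => mul_nonneg j.succ.cast_nonneg (hx _ j.succ_pos)
  · obtain ⟨j, rfl⟩ := Nat.exists_eq_succ_of_ne_zero hk
    rw [div_le_one hpos.1, rtot]
    have hterm := hpos.2.le_tsum j fun i _ => mul_nonneg i.succ.cast_nonneg (hx _ i.succ_pos)
    linarith [le_max_right (x 0) 0]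
  · exact zero_le_one

end Rates

-- Nothing is known about `ζ` outside `[0, T]`; the cut-off makes `rcoordOn` measurable on `ℝ`.
noncomputable def rcoordOn (T : ℝ) (ζ : ℝ → ℕ → ℝ) (k : ℕ) : ℝ → ℝ :=
  (Icc 0 T).indicator fun s => rcoord (ζ s) k

namespace memCT

variable {T : ℝ} {p : ℕ → ℝ} {ζ : ℝ → ℕ → ℝ} {ψ : ℝ → ℝ}

lemma nonneg (hmem : memCT T p ζ ψ) {t : ℝ} (ht : t ∈ Icc 0 T) (k : ℕ) (hk : 1 ≤ k) :
    0 ≤ ζ t k :=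
  (hmem.2.2.2.2.2 k hk).2.1 t ht

lemma le_initial (hmem : memCT T p ζ ψ) {t : ℝ} (ht : t ∈ Icc 0 T) (k : ℕ) (hk : 1 ≤ k) :
    ζ t k ≤ p k := by
  obtain ⟨hinit, -, hanti, -⟩ := hmem.2.2.2.2.2 k hk
  exact hinit ▸ hanti ⟨le_rfl, ht.1.trans ht.2⟩ ht ht.1

lemma continuousOn_rtot (hmem : memCT T p ζ ψ)
    (hkp : Summable fun k : ℕ => ((k + 1 : ℕ) : ℝ) * p (k + 1)) :
    ContinuousOn (fun t => rtot (ζ t)) (Icc 0 T) := by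
  refine (ContinuousOn.sup (hmem.1 0) continuousOn_const).add
    (continuousOn_tsum (fun j => continuousOn_const.mul (hmem.1 _)) hkp fun j t ht => ?_)
  rw [Real.norm_of_nonneg (mul_nonneg j.succ.cast_nonneg (hmem.nonneg ht _ j.succ_pos))]
  exact mul_le_mul_of_nonneg_left (hmem.le_initial ht _ j.succ_pos) j.succ.cast_nonneg

lemma summable_mul (hmem : memCT T p ζ ψ)
    (hkp : Summable fun k : ℕ => ((k + 1 : ℕ) : ℝ) * p (k + 1)) {t : ℝ} (ht : t ∈ Icc 0 T) :
    Summable fun k : ℕ => ((k + 1 : ℕ) : ℝ) * ζ t (k + 1) :=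
  hkp.of_nonneg_of_le (fun k => mul_nonneg k.succ.cast_nonneg (hmem.nonneg ht _ k.succ_pos))
    fun k => mul_le_mul_of_nonneg_left (hmem.le_initial ht _ k.succ_pos) k.succ.cast_nonneg

lemma rcoordOn_nonneg (hmem : memCT T p ζ ψ) (k : ℕ) (s : ℝ) : 0 ≤ rcoordOn T ζ k s :=
  indicator_nonneg (fun _ hs => rcoord_nonneg (hmem.nonneg hs) k) s

lemma rcoordOn_le_one (hmem : memCT T p ζ ψ) (k : ℕ) (s : ℝ) : rcoordOn T ζ k s ≤ 1 := by
  unfold rcoordOn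
  by_cases hs : s ∈ Icc 0 T
  · rw [indicator_of_mem hs]
    exact rcoord_le_one (hmem.nonneg hs) k
  · rw [indicator_of_notMem hs]
    exact zero_le_one

lemma measurable_rcoordOn (hmem : memCT T p ζ ψ)
    (hkp : Summable fun k : ℕ => ((k + 1 : ℕ) : ℝ) * p (k + 1)) (k : ℕ) :
    Measurable (rcoordOn T ζ k) := by
  have hrtot := (hmem.continuousOn_rtot hkp).domRestrict.measurable
  have hnum : Measurable fun s : Icc 0 T =>
      if k = 0 then max (ζ s 0) 0 else (k : ℝ) * ζ s k := by
    by_cases hk : k = 0 <;> simp only [hk, if_true, if_false]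
    · exact (ContinuousOn.sup (hmem.1 0) continuousOn_const).domRestrict.measurable
    · exact (continuousOn_const.mul (hmem.1 k)).domRestrict.measurable
  refine measurable_of_restrict_of_restrict_compl (s := Icc 0 T) measurableSet_Icc ?_ ?_
  · have hrestrict : (Icc 0 T).domRestrict (rcoordOn T ζ k) = fun s : Icc 0 T =>
        if 0 < rtot (ζ s) then (if k = 0 then max (ζ s 0) 0 else (k : ℝ) * ζ s k) / rtot (ζ s)
        else 0 := by
      funext s
      simp only [domRestrict_apply, rcoordOn, indicator_of_mem s.2, rcoord,
        hmem.summable_mul hkp s.2, and_true]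
      split_ifs <;> rfl
    rw [hrestrict]
    exact Measurable.ite (measurableSet_lt measurable_const hrtot) (hnum.div hrtot)
      measurable_const
  · have hrestrict : (Icc 0 T)ᶜ.domRestrict (rcoordOn T ζ k) = fun _ => 0 := by
      funext s
      exact indicator_of_notMem s.2 (fun s => rcoord (ζ s) k)
    rw [hrestrict]
    exact measurable_const

end memCT

section Controls

variable {T : ℝ} {p : ℕ → ℝ} {ζ : ℝ → ℕ → ℝ} {ψ : ℝ → ℝ} {φ φ' : ℕ → ℝ → ℝ → ℝ} {t : ℝ}

lemma integral_flux_rcoordOn (f : ℝ → ℝ → ℝ) (ht : t ∈ Icc 0 T) (k : ℕ) :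
    ∫ s in 0..t, flux (rcoordOn T ζ k) f s
      = ∫ s in 0..t, ∫ y in 0..1, if y < rcoord (ζ s) k then f s y else 0 := by
  refine intervalIntegral.integral_congr fun s hs => ?_
  rw [uIcc_of_le ht.1] at hs
  have hsT : s ∈ Icc 0 T := ⟨hs.1, hs.2.trans ht.2⟩
  rw [flux, rcoordOn, indicator_of_mem hsT]

lemma memST_flatten (hmem : memCT T p ζ ψ)
    (hkp : Summable fun k : ℕ => ((k + 1 : ℕ) : ℝ) * p (k + 1)) (hS : memST T p ζ ψ φ) :
    memST T p ζ ψ fun k => flatten (rcoordOn T ζ k) (φ k) := by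
  obtain ⟨hφ, hφ0, hψ, hζ⟩ := hS
  have hsame : ∀ k, ∀ t ∈ Icc 0 T,
      (∫ s in 0..t, ∫ y in 0..1,
        if y < rcoord (ζ s) k then flatten (rcoordOn T ζ k) (φ k) s y else 0)
      = ∫ s in 0..t, ∫ y in 0..1, if y < rcoord (ζ s) k then φ k s y else 0 := by
    intro k t ht
    rw [← integral_flux_rcoordOn _ ht, ← integral_flux_rcoordOn _ ht]
    congr 1
    funext s
    exact flux_flatten (hmem.rcoordOn_nonneg k s) (hmem.rcoordOn_le_one k s)
  refine ⟨fun k => measurable_flatten (hmem.measurable_rcoordOn hkp k) (hφ k),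
    fun k => flatten_nonneg (hmem.rcoordOn_nonneg k) (hφ0 k), fun t ht => ?_,
    fun k hk t ht => ?_⟩
  · simp only [hsame _ t ht]
    exact hψ t ht
  · rw [hsame k t ht]
    exact hζ k hk t ht

lemma integral_flux_of_one_le (hS : memST T p ζ ψ φ) {k : ℕ} (hk : 1 ≤ k) (ht : t ∈ Icc 0 T) :
    ∫ s in 0..t, flux (rcoordOn T ζ k) (φ k) s = p k - ζ t k := by
  rw [integral_flux_rcoordOn _ ht, hS.2.2.2 k hk t ht]
  ring

lemma neg_two_mul_integral_flux_zero (hmem : memCT T p ζ ψ)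
    (hkp : Summable fun k : ℕ => ((k + 1 : ℕ) : ℝ) * p (k + 1)) (hS : memST T p ζ ψ φ)
    (ht : t ∈ Icc 0 T) :
    -2 * ∫ s in 0..t, flux (rcoordOn T ζ 0) (φ 0) s
      = ψ t - ∑' j : ℕ, (((j + 1 : ℕ) : ℝ) - 2) * (p (j + 1) - ζ t (j + 1)) := by
  obtain ⟨-, -, hψ, hζ⟩ := hS
  have hterm : ∀ j : ℕ, (((j + 1 : ℕ) : ℝ) - 2) * (∫ s in 0..t, ∫ y in 0..1,
      if y < rcoord (ζ s) (j + 1) then φ (j + 1) s y else 0)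
      = (((j + 1 : ℕ) : ℝ) - 2) * (p (j + 1) - ζ t (j + 1)) := fun j => by
    rw [hζ _ j.succ_pos t ht]
    ring
  have htail : Summable fun j : ℕ => (((j + 1 : ℕ) : ℝ) - 2) * (p (j + 1) - ζ t (j + 1)) := by
    refine hkp.of_norm_bounded fun j => ?_
    have hlow := hmem.nonneg ht _ j.succ_pos
    have hup := hmem.le_initial ht _ j.succ_pos
    rw [norm_mul, Real.norm_eq_abs, Real.norm_of_nonneg (sub_nonneg.2 hup)]
    refine mul_le_mul (abs_le.2 ⟨?_, ?_⟩) (by linarith) (sub_nonneg.2 hup) j.succ.cast_nonneg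
    all_goals push_cast; linarith [j.cast_nonneg (α := ℝ)]
  have hsum : Summable fun k : ℕ => ((k : ℝ) - 2) *
      ∫ s in 0..t, ∫ y in 0..1, if y < rcoord (ζ s) k then φ k s y else 0 :=
    (summable_nat_add_iff 1).1 (htail.congr fun j => (hterm j).symm)
  rw [hψ t ht, hsum.tsum_eq_zero_add, tsum_congr hterm, integral_flux_rcoordOn _ ht]
  push_cast
  ring

lemma flux_ae_eq (hmem : memCT T p ζ ψ)
    (hkp : Summable fun k : ℕ => ((k + 1 : ℕ) : ℝ) * p (k + 1))
    (hS : memST T p ζ ψ φ) (hS' : memST T p ζ ψ φ') {k : ℕ}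
    (hcost : ∫⁻ s in Icc 0 T, ∫⁻ y in Icc 0 1, ENNReal.ofReal (klFun (φ k s y)) ≠ ⊤)
    (hcost' : ∫⁻ s in Icc 0 T, ∫⁻ y in Icc 0 1, ENNReal.ofReal (klFun (φ' k s y)) ≠ ⊤) :
    flux (rcoordOn T ζ k) (φ' k) =ᵐ[volume.restrict (Icc 0 T)] flux (rcoordOn T ζ k) (φ k) := by
  have hr := hmem.measurable_rcoordOn hkp k
  refine ae_restrict_Icc_eq_of_forall_integral_eq (integrableOn_flux hr (hS'.1 k) (hS'.2.1 k) hcost')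
    (integrableOn_flux hr (hS.1 k) (hS.2.1 k) hcost) fun t ht => ?_
  rcases Nat.eq_zero_or_pos k with rfl | hk
  · linarith [neg_two_mul_integral_flux_zero hmem hkp hS ht,
      neg_two_mul_integral_flux_zero hmem hkp hS' ht]
  · rw [integral_flux_of_one_le hS hk ht, integral_flux_of_one_le hS' hk ht]

lemma costOf_flatten_le (hmem : memCT T p ζ ψ)
    (hkp : Summable fun k : ℕ => ((k + 1 : ℕ) : ℝ) * p (k + 1))
    (hS : memST T p ζ ψ φ) (hcost : costOf T φ ≠ ⊤) (hS' : memST T p ζ ψ φ') :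
    costOf T (fun k => flatten (rcoordOn T ζ k) (φ k)) ≤ costOf T φ' := by
  simp only [costOf, ellFn_eq_klFun] at hcost ⊢
  refine ENNReal.tsum_le_tsum fun k => ?_
  by_cases hcost' : ∫⁻ s in Icc 0 T, ∫⁻ y in Icc 0 1, ENNReal.ofReal (klFun (φ' k s y)) = ⊤
  · rw [hcost']
    exact le_top
  refine lintegral_mono_ae ?_
  filter_upwards [flux_ae_eq hmem hkp hS hS' (ENNReal.ne_top_of_tsum_ne_top hcost k) hcost']
    with s hs
  exact lintegral_klFun_flatten_le (hmem.rcoordOn_nonneg k s) (hmem.rcoordOn_le_one k s)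
    (hS'.1 k).of_uncurry_left (hS'.2.1 k s) hs

end Controls

theorem stmt15_general (T : ℝ) (p : ℕ → ℝ)
    (hp : ∀ k, 1 ≤ k → 0 ≤ p k)
    (ε : ℝ) (hε : 0 < ε)
    (hmom : Summable (fun k : ℕ => ((k + 1 : ℕ) : ℝ) ^ (1 + ε) * p (k + 1)))
    (ζ : ℝ → ℕ → ℝ) (ψ : ℝ → ℝ)
    (hmem : memCT T p ζ ψ) (hfin : IT T p ζ ψ < ⊤) :
    ∃ φ : ℕ → ℝ → ℝ → ℝ, memST T p ζ ψ φ ∧ costOf T φ = IT T p ζ ψ := by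
  have hkp := summable_mul_of_summable_rpow_mul hp hε.le hmom
  rw [IT, if_pos hmem] at hfin ⊢
  obtain ⟨φ₀, hS₀, hcost₀⟩ : ∃ φ₀, memST T p ζ ψ φ₀ ∧ costOf T φ₀ < ⊤ := by
    simpa only [iInf_lt_iff, exists_prop] using hfin
  have hS := memST_flatten hmem hkp hS₀
  exact ⟨_, hS, le_antisymm (le_iInf₂ fun φ hφ => costOf_flatten_le hmem hkp hS₀ hcost₀.ne hφ)
    (iInf₂_le _ hS)⟩

/-- the infimum defining the rate function I_T is attained whenever
it is finite. -/
theorem stmt15 (T : ℝ) (hT : 0 < T) (p : ℕ → ℝ)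
    (hp : ∀ k, 1 ≤ k → 0 ≤ p k) (hp1 : (∑' k : ℕ, p (k + 1)) = 1)
    (ε : ℝ) (hε : 0 < ε)
    (hmom : Summable (fun k : ℕ => ((k + 1 : ℕ) : ℝ) ^ (1 + ε) * p (k + 1)))
    (ζ : ℝ → ℕ → ℝ) (ψ : ℝ → ℝ)
    (hmem : memCT T p ζ ψ) (hfin : IT T p ζ ψ < ⊤) :
    ∃ φ : ℕ → ℝ → ℝ → ℝ, memST T p ζ ψ φ ∧ costOf T φ = IT T p ζ ψ :=
  stmt15_general T p hp ε hε hmom ζ ψ hmem hfin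
end

section
/- Let p = (p_k)_{k≥1} be a sequence of nonnegative reals with ∑_{k≥1} p_k = 1 and ∑_{k≥1} k²·p_k < ∞, and set μ = ∑_{k≥1} k·p_k. If ρ ∈ [0,1) satisfies ∑_{k≥1} k·p_k·ρ^{k−1} = μ·ρ (with the convention 0⁰ = 1), then ∑_{k≥1} k·(k−2)·p_k·ρ^{k−1} ≤ 0. -/
/-!
Write `a k = (k + 1) p (k + 1)`, so that the hypothesis reads `∑ a k ρ^k = ρ ∑ a k` and the claim
reads `∑ k a k ρ^k ≤ ∑ a k ρ^k`. Termwise, `k ρ^k ≤ ρ + ρ² + ⋯ + ρ^k`, i.e.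
`k ρ^k (1 - ρ) ≤ ρ (1 - ρ^k)`; summing against `a` gives
`(1 - ρ) ∑ k a k ρ^k ≤ ρ (∑ a k - ∑ a k ρ^k) = (1 - ρ) ∑ a k ρ^k`, and `1 - ρ > 0`.
-/

lemma nat_mul_pow_mul_one_sub_le {ρ : ℝ} (hρ0 : 0 ≤ ρ) (hρ1 : ρ ≤ 1) (k : ℕ) :
    k * ρ ^ k * (1 - ρ) ≤ ρ * (1 - ρ ^ k) := by
  induction k with
  | zero => simp
  | succ k ih =>
    have hρk : ρ ^ k ≤ 1 := pow_le_one₀ hρ0 hρ1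
    have hstep : ρ * (k * ρ ^ k * (1 - ρ)) ≤ ρ * (ρ * (1 - ρ ^ k)) :=
      mul_le_mul_of_nonneg_left ih hρ0
    push_cast
    rw [pow_succ]
    nlinarith [mul_nonneg (mul_nonneg hρ0 (sub_nonneg.mpr hρ1)) (sub_nonneg.mpr hρk)]

section WeightedPowerSeries

variable {a : ℕ → ℝ} {ρ : ℝ}

lemma summable_mul_pow_of_nonneg (ha0 : ∀ k, 0 ≤ a k) (ha : Summable a) (hρ0 : 0 ≤ ρ)
    (hρ1 : ρ ≤ 1) : Summable fun k => a k * ρ ^ k :=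
  ha.of_nonneg_of_le (fun k => mul_nonneg (ha0 k) (pow_nonneg hρ0 k))
    fun k => mul_le_of_le_one_right (ha0 k) (pow_le_one₀ hρ0 hρ1)

lemma summable_nat_mul_mul_pow_of_nonneg (ha0 : ∀ k, 0 ≤ a k) (ha : Summable a) (hρ0 : 0 ≤ ρ)
    (hρ1 : ρ < 1) : Summable fun k : ℕ => k * a k * ρ ^ k := by
  have h1ρ : 0 < 1 - ρ := sub_pos.mpr hρ1
  refine (ha.mul_left (ρ / (1 - ρ))).of_nonneg_of_le
    (fun k => by have := ha0 k; positivity) fun k => ?_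
  have hkρ : k * ρ ^ k ≤ ρ / (1 - ρ) := by
    rw [le_div_iff₀ h1ρ]
    nlinarith [nat_mul_pow_mul_one_sub_le hρ0 hρ1.le k, pow_nonneg hρ0 k]
  calc (k : ℝ) * a k * ρ ^ k = k * ρ ^ k * a k := by ring
    _ ≤ ρ / (1 - ρ) * a k := mul_le_mul_of_nonneg_right hkρ (ha0 k)

lemma one_sub_mul_tsum_nat_mul_mul_pow_le (ha0 : ∀ k, 0 ≤ a k) (ha : Summable a)
    (hρ0 : 0 ≤ ρ) (hρ1 : ρ < 1) :
    (1 - ρ) * ∑' k : ℕ, k * a k * ρ ^ k ≤ ρ * (∑' k, a k - ∑' k, a k * ρ ^ k) := by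
  have hpow := summable_mul_pow_of_nonneg ha0 ha hρ0 hρ1.le
  have hterm (k : ℕ) : (1 - ρ) * (k * a k * ρ ^ k) ≤ ρ * (a k - a k * ρ ^ k) := by
    have := mul_le_mul_of_nonneg_left (nat_mul_pow_mul_one_sub_le hρ0 hρ1.le k) (ha0 k)
    linarith
  calc (1 - ρ) * ∑' k : ℕ, k * a k * ρ ^ k = ∑' k : ℕ, (1 - ρ) * (k * a k * ρ ^ k) :=
        tsum_mul_left.symm
    _ ≤ ∑' k, ρ * (a k - a k * ρ ^ k) :=
        Summable.tsum_le_tsum hterm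
          ((summable_nat_mul_mul_pow_of_nonneg ha0 ha hρ0 hρ1).mul_left _)
          ((ha.sub hpow).mul_left _)
    _ = ρ * (∑' k, a k - ∑' k, a k * ρ ^ k) := by rw [tsum_mul_left, ha.tsum_sub hpow]

end WeightedPowerSeries

theorem stmt17_general (p : ℕ → ℝ) (hp : ∀ k, 1 ≤ k → 0 ≤ p k)
    (hp2 : Summable (fun k : ℕ => ((k + 1 : ℕ) : ℝ) ^ 2 * p (k + 1)))
    (μ : ℝ) (hμ : μ = ∑' k : ℕ, ((k + 1 : ℕ) : ℝ) * p (k + 1))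
    (ρ : ℝ) (hρ : ρ ∈ Set.Ico (0 : ℝ) 1)
    (hfix : (∑' k : ℕ, ((k + 1 : ℕ) : ℝ) * p (k + 1) * ρ ^ k) = μ * ρ) :
    (∑' k : ℕ, ((k + 1 : ℕ) : ℝ) * (((k + 1 : ℕ) : ℝ) - 2) * p (k + 1) * ρ ^ k) ≤ 0 := by
  obtain ⟨hρ0, hρ1⟩ := hρ
  set a : ℕ → ℝ := fun k => ((k + 1 : ℕ) : ℝ) * p (k + 1)
  have ha0 (k : ℕ) : 0 ≤ a k := mul_nonneg k.succ.cast_nonneg (hp _ k.succ_pos)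
  have ha : Summable a := hp2.of_nonneg_of_le ha0 fun k => by
    rw [sq, mul_assoc]
    exact le_mul_of_one_le_left (ha0 k) (by simp)
  have hkey := one_sub_mul_tsum_nat_mul_mul_pow_le ha0 ha hρ0 hρ1
  have hsplit : (∑' k : ℕ, ((k + 1 : ℕ) : ℝ) * (((k + 1 : ℕ) : ℝ) - 2) * p (k + 1) * ρ ^ k)
      = ∑' k : ℕ, k * a k * ρ ^ k - ∑' k, a k * ρ ^ k := by
    rw [← (summable_nat_mul_mul_pow_of_nonneg ha0 ha hρ0 hρ1).tsum_sub
      (summable_mul_pow_of_nonneg ha0 ha hρ0 hρ1.le)]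
    congr 1 with k
    simp only [a]
    push_cast
    ring
  have hfix' : ∑' k, a k * ρ ^ k = μ * ρ := hfix
  rw [hsplit, hfix']
  rw [hfix', ← hμ] at hkey
  nlinarith

/-- If p is nonnegative with ∑ p_k = 1, ∑ k²·p_k < ∞, μ = ∑ k·p_k, and
ρ ∈ [0,1) satisfies ∑ k·p_k·ρ^{k−1} = μ·ρ (with 0⁰ = 1), then
∑ k·(k−2)·p_k·ρ^{k−1} ≤ 0. -/
theorem stmt17 (p : ℕ → ℝ) (hp : ∀ k, 1 ≤ k → 0 ≤ p k)
    (hp1sum : (∑' k : ℕ, p (k + 1)) = 1)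
    (hp2 : Summable (fun k : ℕ => ((k + 1 : ℕ) : ℝ) ^ 2 * p (k + 1)))
    (μ : ℝ) (hμ : μ = ∑' k : ℕ, ((k + 1 : ℕ) : ℝ) * p (k + 1))
    (ρ : ℝ) (hρ : ρ ∈ Set.Ico (0 : ℝ) 1)
    (hfix : (∑' k : ℕ, ((k + 1 : ℕ) : ℝ) * p (k + 1) * ρ ^ k) = μ * ρ) :
    (∑' k : ℕ, ((k + 1 : ℕ) : ℝ) * (((k + 1 : ℕ) : ℝ) - 2) * p (k + 1) * ρ ^ k) ≤ 0 :=
  stmt17_general p hp hp2 μ hμ ρ hρ hfix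
end
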